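/- arXiv:1809.09890 — 11 statements merged into one kernel-verified Lean document; each statement's English description precedes it below -/
import Mathlib

section
/- Let k ≥ 1 be a natural number and t a nonnegative integer. If k is odd and t ≤ (k+3)/8, then 2^{-k} · Σ_{j=0}^{⌊k/2⌋ - t} C(k,j) ≥ (1/(2 + 4/√π)) · exp(-16·(log 2)·t²/k). If k is even and t ≤ (k+6)/8, then 2^{-k} · Σ_{j=0}^{⌊k/2⌋ - t} C(k,j) ≥ (1/(2 + 4/√π)) · exp(-16·(log 2)·(t - 1/2)²/k). -/
/-!
Let `m = ⌊k/2⌋`, `r = k mod 2` and `B = 2⁻ᵏ C(k, m)`. Wallis' product gives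
`1/(2√n) ≤ B ≤ 1/√(π n)` with `n = ⌈k/2⌉`. The tail has two lower bounds. Dropping the `t`
terms nearest the middle from the half sum (which is `1/2`, resp. `1/2 + B/2`) costs at most
`t B`. Alternatively, the `t` terms with indices `m - 2t + 1, …, m - t` are each at least
`C(k, m - J) ≥ C(k, m) exp(-4 log 2 · J (J + r)/(k + 1))` for `J = 2t - 1`, because the
consecutive ratios `C(k, j)/C(k, j + 1) = (1 - x)/(1 + x)` are at least `exp(-4 log 2 · x)`
for `x ≤ 1/2`. For `t ≲ √k` the first bound is at least the constant; beyond that `t B`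
exceeds it.
-/

open Real Finset

theorem wallis_W_mul_centralBinom_sq (n : ℕ) :
    Wallis.W n * (2 * n + 1) * (Nat.centralBinom n : ℝ) ^ 2 = ((4 : ℝ) ^ n) ^ 2 := by
  have hfact : ((2 * n).factorial : ℝ) = Nat.centralBinom n * (n.factorial : ℝ) ^ 2 := by
    have h := Nat.choose_mul_factorial_mul_factorial (show n ≤ 2 * n by omega)
    rw [show 2 * n - n = n by omega, ← Nat.centralBinom_eq_two_mul_choose] at h
    rw [← h]; push_cast; ring
  rw [Wallis.W_eq_factorial_ratio, hfact]
  have : (n.factorial : ℝ) ≠ 0 := by positivity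
  have : (Nat.centralBinom n : ℝ) ≠ 0 := mod_cast (Nat.centralBinom_pos n).ne'
  field_simp
  rw [show (4 : ℝ) = 2 ^ 2 by norm_num, ← pow_mul, ← pow_mul]
  ring_nf

theorem centralBinom_div_four_pow_le (n : ℕ) (hn : 0 < n) :
    (Nat.centralBinom n : ℝ) / 4 ^ n ≤ 1 / (√π * √n) := by
  have hW := Wallis.le_W n
  have hid := wallis_W_mul_centralBinom_sq n
  have hn' : (0 : ℝ) < n := by exact_mod_cast hn
  have hWn : π * n ≤ Wallis.W n * (2 * n + 1) := by
    rw [div_mul_eq_mul_div, div_le_iff₀ (by positivity)] at hW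
    nlinarith [mul_le_mul_of_nonneg_left hW (by positivity : (0 : ℝ) ≤ 2 * n + 1), pi_pos]
  have hsq : (Nat.centralBinom n * √(π * n)) ^ 2 ≤ ((4 : ℝ) ^ n) ^ 2 := by
    rw [mul_pow, sq_sqrt (by positivity), ← hid, mul_comm]
    gcongr
  rw [div_le_div_iff₀ (by positivity) (by positivity), one_mul, ← sqrt_mul pi_pos.le]
  exact le_of_sq_le_sq hsq (by positivity)

theorem one_div_two_mul_sqrt_le_centralBinom_div_four_pow (n : ℕ) (hn : 0 < n) :
    1 / (2 * √n) ≤ (Nat.centralBinom n : ℝ) / 4 ^ n := by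
  have hW : Wallis.W n * (2 * n + 1) ≤ 4 * n := by
    -- `W n ≤ π / 2` is too weak at `n = 1`, where equality holds
    rcases (Nat.one_le_iff_ne_zero.mpr hn.ne').eq_or_lt with rfl | hn2
    · norm_num [Wallis.W]
    · have : (2 : ℝ) ≤ n := by exact_mod_cast hn2
      nlinarith [Wallis.W_le n, pi_lt_d2, Wallis.W_pos n]
  have hid := wallis_W_mul_centralBinom_sq n
  have hsq : ((4 : ℝ) ^ n) ^ 2 ≤ (Nat.centralBinom n * (2 * √n)) ^ 2 := by
    rw [mul_pow, mul_pow, sq_sqrt (by positivity), ← hid]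
    nlinarith [sq_nonneg (Nat.centralBinom n : ℝ)]
  rw [div_le_div_iff₀ (by positivity) (by positivity), one_mul]
  exact le_of_sq_le_sq hsq (by positivity)

theorem exp_neg_four_mul_log_two_mul_le {x : ℝ} (hx0 : 0 ≤ x) (hx1 : x ≤ 1 / 2) :
    exp (-(4 * log 2 * x)) ≤ (1 - x) / (1 + x) := by
  have ha : 11 / 4 ≤ 4 * log 2 := by linarith [log_two_gt_d9]
  have key : 1 + x ≤ exp (4 * log 2 * x) * (1 - x) :=
    calc 1 + x ≤ (1 + 11 / 4 * x + (11 / 4 * x) ^ 2 / 2) * (1 - x) := by nlinarith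
      _ ≤ exp (11 / 4 * x) * (1 - x) := by
        gcongr
        · linarith
        · exact quadratic_le_exp_of_nonneg (by positivity)
      _ ≤ exp (4 * log 2 * x) * (1 - x) := by gcongr; linarith
  rw [exp_neg, le_div_iff₀ (by linarith), inv_mul_le_iff₀ (exp_pos _)]
  exact key

theorem exp_mul_choose_succ_le_choose {k j : ℕ} (hj : 2 * j + 1 ≤ k) (hk : k ≤ 4 * j + 3) :
    exp (-(4 * log 2 * ((k - 2 * j - 1) / (k + 1)))) * k.choose (j + 1) ≤ k.choose j := by
  have hj' : (2 * j + 1 : ℝ) ≤ k := by exact_mod_cast hj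
  have hk' : (k : ℝ) ≤ 4 * j + 3 := by exact_mod_cast hk
  have hx : (1 - (k - 2 * j - 1) / (k + 1)) / (1 + (k - 2 * j - 1) / (k + 1)) =
      ((j : ℝ) + 1) / (k - j) := by
    have h1 : 1 - (k - 2 * j - 1) / (k + 1) = 2 * ((j : ℝ) + 1) / (k + 1) := by
      field_simp; ring
    have h2 : 1 + (k - 2 * j - 1) / (k + 1) = 2 * ((k : ℝ) - j) / (k + 1) := by
      field_simp; ring
    rw [h1, h2, div_div_div_cancel_right₀ (by positivity), mul_div_mul_left _ _ two_ne_zero]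
  have hstep : (k.choose (j + 1) : ℝ) * (j + 1) = k.choose j * (k - j) := by
    have h := congrArg (Nat.cast (R := ℝ)) (Nat.choose_succ_right_eq k j)
    push_cast [Nat.cast_sub (show j ≤ k by omega)] at h
    exact h
  calc exp (-(4 * log 2 * ((k - 2 * j - 1) / (k + 1)))) * k.choose (j + 1)
      ≤ ((j + 1) / (k - j)) * k.choose (j + 1) := by
        rw [← hx]
        gcongr
        apply exp_neg_four_mul_log_two_mul_le
        · apply div_nonneg <;> linarith
        · rw [div_le_iff₀ (by positivity)]; linarith
    _ = k.choose j := by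
        rw [div_mul_eq_mul_div, mul_comm, hstep, mul_div_assoc, div_self (by linarith), mul_one]

theorem exp_mul_choose_half_le_choose_half_sub (k J : ℕ) (hJ : 4 * J + 2 * (k % 2) ≤ k + 3) :
    exp (-(4 * log 2 * (J * (J + (k % 2 : ℕ)))) / (k + 1)) * k.choose (k / 2) ≤
      k.choose (k / 2 - J) := by
  induction J with
  | zero => simp
  | succ J ih =>
    obtain ⟨j, hj⟩ : ∃ j, k / 2 = j + J + 1 := ⟨k / 2 - (J + 1), by omega⟩
    have hk : (k : ℝ) = 2 * j + 2 * J + 2 + (k % 2 : ℕ) := by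
      exact_mod_cast (by omega : k = 2 * j + 2 * J + 2 + k % 2)
    have hexp : -(4 * log 2 * (((J + 1 : ℕ) : ℝ) * ((J + 1 : ℕ) + (k % 2 : ℕ)))) / (k + 1) =
        -(4 * log 2 * ((k - 2 * j - 1) / (k + 1))) +
          -(4 * log 2 * (J * (J + (k % 2 : ℕ)))) / (k + 1) := by
      rw [hk]; push_cast; ring
    calc exp (-(4 * log 2 * (((J + 1 : ℕ) : ℝ) * ((J + 1 : ℕ) + (k % 2 : ℕ)))) / (k + 1)) *
          k.choose (k / 2)
        = exp (-(4 * log 2 * ((k - 2 * j - 1) / (k + 1)))) *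
            (exp (-(4 * log 2 * (J * (J + (k % 2 : ℕ)))) / (k + 1)) * k.choose (k / 2)) := by
          rw [hexp, exp_add, mul_assoc]
      _ ≤ exp (-(4 * log 2 * ((k - 2 * j - 1) / (k + 1)))) * k.choose (j + 1) := by
          rw [show j + 1 = k / 2 - J by omega]
          gcongr
          exact ih (by omega)
      _ ≤ k.choose j := exp_mul_choose_succ_le_choose (by omega) (by omega)
      _ = k.choose (k / 2 - (J + 1)) := by rw [show k / 2 - (J + 1) = j by omega]

theorem sum_range_succ_le_sum_range_sub_succ_add {f : ℕ → ℝ} {M : ℝ} {n t : ℕ}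
    (hf : ∀ j, f j ≤ M) (ht : t ≤ n) :
    ∑ j ∈ range (n + 1), f j ≤ ∑ j ∈ range (n - t + 1), f j + t * M := by
  rw [← sum_range_add_sum_Ico _ (show n - t + 1 ≤ n + 1 by omega)]
  gcongr
  calc ∑ j ∈ Ico (n - t + 1) (n + 1), f j ≤ #(Ico (n - t + 1) (n + 1)) • M :=
        sum_le_card_nsmul _ _ _ fun j _ => hf j
    _ = t * M := by rw [Nat.card_Ico, nsmul_eq_mul]; congr; omega

theorem choose_le_choose_of_le_of_le_half {n a b : ℕ} (hab : a ≤ b) (hb : b ≤ n / 2) :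
    n.choose a ≤ n.choose b := by
  induction b, hab using Nat.le_induction with
  | base => rfl
  | succ b _ ih => exact (ih (by omega)).trans (Nat.choose_le_succ_of_lt_half_left (by omega))

theorem mul_choose_le_sum_range_choose {k t : ℕ} (ht : 2 * t ≤ k / 2 + 1) :
    (t : ℝ) * k.choose (k / 2 + 1 - 2 * t) ≤
      ∑ j ∈ range (k / 2 - t + 1), (k.choose j : ℝ) := by
  calc (t : ℝ) * k.choose (k / 2 + 1 - 2 * t)
      = #(Ico (k / 2 + 1 - 2 * t) (k / 2 + 1 - t)) • (k.choose (k / 2 + 1 - 2 * t) : ℝ) := by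
        rw [Nat.card_Ico, nsmul_eq_mul]; congr; omega
    _ ≤ ∑ j ∈ Ico (k / 2 + 1 - 2 * t) (k / 2 + 1 - t), (k.choose j : ℝ) :=
        card_nsmul_le_sum _ _ _ fun j hj => by
          rw [mem_Ico] at hj
          exact_mod_cast choose_le_choose_of_le_of_le_half hj.1 (by omega)
    _ ≤ ∑ j ∈ range (k / 2 - t + 1), (k.choose j : ℝ) :=
        sum_le_sum_of_subset_of_nonneg (fun j hj => by simp only [mem_Ico, mem_range] at *; omega)
          fun _ _ _ => by positivity

theorem two_mul_sum_range_choose_two_mul (m : ℕ) :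
    2 * ∑ j ∈ range (m + 1), (2 * m).choose j = 4 ^ m + (2 * m).choose m := by
  have hrefl :
      ∑ j ∈ range m, (2 * m).choose (m + 1 + j) = ∑ j ∈ range m, (2 * m).choose j := by
    rw [← sum_range_reflect]
    refine sum_congr rfl fun j hj => ?_
    rw [mem_range] at hj
    rw [← Nat.choose_symm (by omega), show 2 * m - (m + 1 + (m - 1 - j)) = j by omega]
  have htotal := Nat.sum_range_choose (2 * m)
  rw [show 2 * m + 1 = (m + 1) + m by omega, sum_range_add, hrefl] at htotal
  rw [sum_range_succ] at htotal ⊢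
  rw [show (4 : ℕ) ^ m = 2 ^ (2 * m) by rw [pow_mul]; norm_num, ← htotal]
  ring

noncomputable def binomLowerTail (k s : ℕ) : ℝ :=
  (2 : ℝ)⁻¹ ^ k * ∑ j ∈ range (k / 2 - s + 1), (k.choose j : ℝ)

noncomputable def binomMiddle (k : ℕ) : ℝ := (2 : ℝ)⁻¹ ^ k * k.choose (k / 2)

theorem half_sub_le_binomLowerTail_of_odd (m t : ℕ) (ht : t ≤ m) :
    1 / 2 - t * binomMiddle (2 * m + 1) ≤ binomLowerTail (2 * m + 1) t := by
  have hhalf : ∑ j ∈ range (m + 1), ((2 * m + 1).choose j : ℝ) = 4 ^ m := by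
    exact_mod_cast Nat.sum_range_choose_halfway m
  have hsplit := sum_range_succ_le_sum_range_sub_succ_add
    (fun j => Nat.cast_le.mpr (Nat.choose_le_middle j (2 * m + 1))) ht
  rw [show (2 * m + 1) / 2 = m by omega, hhalf] at hsplit
  rw [binomLowerTail, binomMiddle, show (2 * m + 1) / 2 = m by omega]
  have h4 : (2 : ℝ)⁻¹ ^ (2 * m + 1) * 4 ^ m = 1 / 2 := by
    rw [pow_succ, pow_mul, mul_right_comm, ← mul_pow]; norm_num
  nlinarith [pow_pos (by norm_num : (0 : ℝ) < 2⁻¹) (2 * m + 1)]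

theorem half_sub_le_binomLowerTail_of_even (m t : ℕ) (ht : t ≤ m) :
    1 / 2 - (t - 1 / 2) * binomMiddle (2 * m) ≤ binomLowerTail (2 * m) t := by
  have hhalf :
      2 * ∑ j ∈ range (m + 1), ((2 * m).choose j : ℝ) = 4 ^ m + (2 * m).choose m := by
    exact_mod_cast two_mul_sum_range_choose_two_mul m
  have hsplit := sum_range_succ_le_sum_range_sub_succ_add
    (fun j => Nat.cast_le.mpr (Nat.choose_le_middle j (2 * m))) ht
  rw [show 2 * m / 2 = m by omega] at hsplit
  rw [binomLowerTail, binomMiddle, show 2 * m / 2 = m by omega]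
  have h4 : (2 : ℝ)⁻¹ ^ (2 * m) * 4 ^ m = 1 := by
    rw [pow_mul]; norm_num [← mul_pow]
  nlinarith [pow_pos (by norm_num : (0 : ℝ) < 2⁻¹) (2 * m)]

theorem binomMiddle_eq (k : ℕ) :
    binomMiddle k = Nat.centralBinom ((k + 1) / 2) / 4 ^ ((k + 1) / 2) := by
  rw [binomMiddle]
  obtain ⟨m, rfl | rfl⟩ := Nat.even_or_odd' k
  · rw [show (2 * m + 1) / 2 = m by omega, show 2 * m / 2 = m by omega,
      Nat.centralBinom_eq_two_mul_choose, pow_mul, div_eq_inv_mul, ← inv_pow]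
    norm_num
  · rw [show (2 * m + 1 + 1) / 2 = m + 1 by omega, show (2 * m + 1) / 2 = m by omega,
      Nat.centralBinom_eq_two_mul_choose, show 2 * (m + 1) = 2 * m + 1 + 1 by ring,
      Nat.choose_succ_succ, Nat.choose_symm_half, pow_succ, pow_mul, div_eq_inv_mul, ← inv_pow,
      pow_succ]
    push_cast
    norm_num
    ring

theorem one_div_two_mul_sqrt_le_binomMiddle {k : ℕ} (hk : 1 ≤ k) :
    1 / (2 * √((k + 1) / 2 : ℕ)) ≤ binomMiddle k := by
  rw [binomMiddle_eq]
  exact one_div_two_mul_sqrt_le_centralBinom_div_four_pow _ (by omega)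

theorem binomMiddle_le {k : ℕ} (hk : 1 ≤ k) :
    binomMiddle k ≤ 1 / (√π * √((k + 1) / 2 : ℕ)) := by
  rw [binomMiddle_eq]
  exact centralBinom_div_four_pow_le _ (by omega)

theorem mul_binomMiddle_mul_exp_le_binomLowerTail (k t : ℕ) (ht : 8 * t + 2 * (k % 2) ≤ k + 7) :
    t * binomMiddle k *
        exp (-(4 * log 2 * ((2 * t - 1) * (2 * t - 1 + (k % 2 : ℕ)))) / (k + 1)) ≤
      binomLowerTail k t := by
  rcases Nat.eq_zero_or_pos t with rfl | ht0
  · simp only [Nat.cast_zero, zero_mul, binomLowerTail]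
    positivity
  have hratio := exp_mul_choose_half_le_choose_half_sub k (2 * t - 1) (by omega)
  rw [show k / 2 - (2 * t - 1) = k / 2 + 1 - 2 * t by omega,
    Nat.cast_sub (by omega : 1 ≤ 2 * t)] at hratio
  push_cast at hratio
  rw [binomMiddle, binomLowerTail]
  calc t * ((2 : ℝ)⁻¹ ^ k * k.choose (k / 2)) *
        exp (-(4 * log 2 * ((2 * t - 1) * (2 * t - 1 + (k % 2 : ℕ)))) / (k + 1))
      = (2 : ℝ)⁻¹ ^ k * (t * (exp (-(4 * log 2 * ((2 * t - 1) * (2 * t - 1 + (k % 2 : ℕ)))) /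
          (k + 1)) * k.choose (k / 2))) := by ring
    _ ≤ (2 : ℝ)⁻¹ ^ k * (t * k.choose (k / 2 + 1 - 2 * t)) := by gcongr
    _ ≤ (2 : ℝ)⁻¹ ^ k * ∑ j ∈ range (k / 2 - t + 1), (k.choose j : ℝ) := by
        gcongr
        exact mul_choose_le_sum_range_choose (by omega)

theorem exp_neg_div_le_exp_neg_div_add_one {a b k : ℝ} (hk : 0 < k) (hb : 0 ≤ b)
    (hab : a ≤ b) :
    exp (-b / k) ≤ exp (-a / (k + 1)) := by
  rw [exp_le_exp, div_le_div_iff₀ hk (by linarith)]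
  nlinarith [mul_le_mul_of_nonneg_right hab hk.le]

theorem mul_le_of_le_half_sub_of_le_mul {σ B s t E S : ℝ} (hσ : 0 < σ)
    (hB_lo : 1 / (2 * σ) ≤ B) (hB_hi : B ≤ 1 / (√π * σ)) (hst : s ≤ t) (hE0 : 0 ≤ E) (hE1 : E ≤ 1)
    (h_half : 1 / 2 - s * B ≤ S) (h_mul : t * B * E ≤ S) :
    1 / (2 + 4 / √π) * E ≤ S := by
  have hπ : 0 < √π := sqrt_pos.mpr pi_pos
  -- `c` is where the two regimes meet: `s ≤ 2 c σ` gives `1/2 - s B ≥ c`, else `t B > c`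
  have hc : 1 / 2 - 1 / (2 + 4 / √π) = 2 * (1 / (2 + 4 / √π)) / √π := by field_simp; ring
  set c := 1 / (2 + 4 / √π)
  have hc0 : 0 < c := by positivity
  have hc_half : c ≤ 1 / 2 := by linarith [show 0 ≤ 2 * c / √π by positivity]
  have hB0 : 0 ≤ B := le_trans (by positivity) hB_lo
  by_cases hs : s ≤ 2 * c * σ
  · have hsB : s * B ≤ 1 / 2 - c := by
      rcases le_total s 0 with hs0 | hs0
      · linarith [mul_nonpos_of_nonpos_of_nonneg hs0 hB0]
      · calc s * B ≤ 2 * c * σ * (1 / (√π * σ)) := mul_le_mul hs hB_hi hB0 (by positivity)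
          _ = 1 / 2 - c := by rw [hc]; field_simp
    nlinarith
  · have hcB : c ≤ t * B := by
      calc c = 2 * c * σ * (1 / (2 * σ)) := by field_simp
        _ ≤ s * B := mul_le_mul (by linarith) hB_lo (by positivity) (by nlinarith)
        _ ≤ t * B := by gcongr
    nlinarith

theorem const_mul_exp_le_binomLowerTail {k t : ℕ} {s b : ℝ} (hk : 1 ≤ k)
    (ht : 8 * t + 2 * (k % 2) ≤ k + 7) (hst : s ≤ t) (hb : 0 ≤ b)
    (hb' : 4 * log 2 * ((2 * t - 1) * (2 * t - 1 + (k % 2 : ℕ))) ≤ b)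
    (h_half : 1 / 2 - s * binomMiddle k ≤ binomLowerTail k t) :
    1 / (2 + 4 / √π) * exp (-b / k) ≤ binomLowerTail k t := by
  have hk0 : (0 : ℝ) < k := by exact_mod_cast hk
  have hσ : 0 < √((k + 1) / 2 : ℕ) :=
    sqrt_pos.mpr (by exact_mod_cast (by omega : 0 < (k + 1) / 2))
  have htB : 0 ≤ (t : ℝ) * binomMiddle k := by rw [binomMiddle]; positivity
  refine mul_le_of_le_half_sub_of_le_mul hσ (one_div_two_mul_sqrt_le_binomMiddle hk)
    (binomMiddle_le hk) hst (exp_pos _).le ?_ h_half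
    ((mul_binomMiddle_mul_exp_le_binomLowerTail k t ht).trans' ?_)
  · exact exp_le_one_iff.mpr (div_nonpos_of_nonpos_of_nonneg (by linarith) hk0.le)
  · exact mul_le_mul_of_nonneg_left (exp_neg_div_le_exp_neg_div_add_one hk0 hb hb') htB

/-- Lower bound for binomial tail sums (Lemma on binomial tails, odd and even case). -/
theorem binom_tail_lower_bound (k t : ℕ) (hk : 1 ≤ k) :
    (Odd k → (t : ℝ) ≤ ((k : ℝ) + 3) / 8 →
      (2 : ℝ)⁻¹ ^ k * ∑ j ∈ Finset.range (k / 2 - t + 1), (k.choose j : ℝ) ≥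
        1 / (2 + 4 / Real.sqrt Real.pi) *
          Real.exp (-(16 * Real.log 2 * (t : ℝ) ^ 2) / k)) ∧
    (Even k → (t : ℝ) ≤ ((k : ℝ) + 6) / 8 →
      (2 : ℝ)⁻¹ ^ k * ∑ j ∈ Finset.range (k / 2 - t + 1), (k.choose j : ℝ) ≥
        1 / (2 + 4 / Real.sqrt Real.pi) *
          Real.exp (-(16 * Real.log 2 * ((t : ℝ) - 1 / 2) ^ 2) / k)) := by
  have hlog : 0 < log 2 := log_pos one_lt_two
  refine ⟨fun ⟨m, hm⟩ ht => ?_, fun ⟨m, hm⟩ ht => ?_⟩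
  · have ht8 : 8 * t ≤ k + 3 := by exact_mod_cast (by linarith : (8 * t : ℝ) ≤ k + 3)
    have hr : k % 2 = 1 := by omega
    refine const_mul_exp_le_binomLowerTail hk (by omega) le_rfl (by positivity)
      (by rw [hr]; push_cast; nlinarith) ?_
    subst hm
    exact half_sub_le_binomLowerTail_of_odd m t (by omega)
  · have ht8 : 8 * t ≤ k + 6 := by exact_mod_cast (by linarith : (8 * t : ℝ) ≤ k + 6)
    have hr : k % 2 = 0 := by omega
    refine const_mul_exp_le_binomLowerTail hk (by omega) (by linarith : (t : ℝ) - 1 / 2 ≤ t)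
      (by positivity) (by rw [hr]; push_cast; nlinarith) ?_
    rw [hm, ← two_mul]
    exact half_sub_le_binomLowerTail_of_even m t (by omega)
end

section
/- For all natural numbers k, k' with k ≥ k', one has 2^{-k} · [ Σ_{j=0}^{⌊(k - k')/2⌋} C(k,j) + Σ_{j=⌈(k + k' + 1)/2⌉}^{k} C(k,j) ] ≥ 2^{-k'}. -/
/-! Put `d = k - k'`. Reflecting `j ↦ k - j` turns the upper tail of row `k` into the lower tail
`j < d - d/2`, so both tails are lower tails of row `k` and dominate the same lower tails of
row `d`, whose index ranges `[0, d/2]` and `[0, d - d/2)` reflect to a partition of `[0, d]`.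
Hence the two tails sum to at least `2^d = 2^(k - k')`. -/

open Finset

theorem Nat.sum_Icc_choose_eq_sum_range_choose {n m : ℕ} (hm : m ≤ n + 1) :
    ∑ j ∈ Icc (n + 1 - m) n, n.choose j = ∑ j ∈ range m, n.choose j := by
  refine sum_nbij' (n - ·) (n - ·) ?_ ?_ ?_ ?_ ?_ <;> intro j hj <;> simp at hj ⊢ <;> try omega
  exact (Nat.choose_symm hj.2).symm

theorem Nat.sum_range_choose_add_sum_range_choose {d m : ℕ} (hm : m ≤ d + 1) :
    ∑ j ∈ range m, d.choose j + ∑ j ∈ range (d + 1 - m), d.choose j = 2 ^ d := by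
  rw [← Nat.sum_Icc_choose_eq_sum_range_choose (m := d + 1 - m) (by omega), Nat.sub_sub_self hm,
    ← Finset.Ico_add_one_right_eq_Icc, sum_range_add_sum_Ico _ hm, Nat.sum_range_choose]

theorem Nat.two_pow_sub_le_sum_choose_two_tails {k k' : ℕ} (h : k' ≤ k) :
    2 ^ (k - k') ≤ ∑ j ∈ range ((k - k') / 2 + 1), k.choose j +
      ∑ j ∈ Icc ((k + k' + 2) / 2) k, k.choose j := by
  set d := k - k'
  have hupper : (k + k' + 2) / 2 = k + 1 - (d + 1 - (d / 2 + 1)) := by omega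
  rw [hupper, Nat.sum_Icc_choose_eq_sum_range_choose (by omega),
    ← Nat.sum_range_choose_add_sum_range_choose (m := d / 2 + 1) (by omega)]
  gcongr <;> exact Nat.sub_le k k'

/-- For all natural numbers `k ≥ k'`,
`2⁻ᵏ · [ Σ_{j=0}^{⌊(k-k')/2⌋} C(k,j) + Σ_{j=⌈(k+k'+1)/2⌉}^{k} C(k,j) ] ≥ 2^{-k'}`. -/
theorem binom_two_tails_lower_bound (k k' : ℕ) (h : k' ≤ k) :
    (2 : ℝ)⁻¹ ^ k *
        ((∑ j ∈ Finset.range ((k - k') / 2 + 1), (k.choose j : ℝ)) +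
          ∑ j ∈ Finset.Icc ((k + k' + 2) / 2) k, (k.choose j : ℝ)) ≥
      (2 : ℝ)⁻¹ ^ k' := by
  have htails : (2 : ℝ) ^ (k - k') ≤ ∑ j ∈ range ((k - k') / 2 + 1), (k.choose j : ℝ) +
      ∑ j ∈ Icc ((k + k' + 2) / 2) k, (k.choose j : ℝ) := by
    exact_mod_cast Nat.two_pow_sub_le_sum_choose_two_tails h
  calc (2 : ℝ)⁻¹ ^ k' = 2⁻¹ ^ k * 2 ^ (k - k') := by
        rw [← Nat.add_sub_cancel' h, pow_add, Nat.add_sub_cancel_left, mul_assoc, ← mul_pow,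
          inv_mul_cancel₀ two_ne_zero, one_pow, mul_one]
    _ ≤ _ := by gcongr
end

section
/- For every natural number k ≥ 1, the central binomial coefficient satisfies C(k, ⌊k/2⌋) < 2^k / √(π · ⌈k/2⌉). -/
/-!
Wallis' product gives `W n = 16ⁿ / (C(2n, n)² (2n + 1)) ≥ (2n + 1) / (2n + 2) · π / 2`, i.e.
`C(2n, n)² ≤ 16ⁿ · 4(n + 1) / (π (2n + 1)²)`, and `4n(n + 1) < (2n + 1)²` makes this
`C(2n, n) √(π n) < 4ⁿ`. For odd `k = 2m + 1` one uses `C(2m + 2, m + 1) = 2 C(2m + 1, m)`.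
-/

open Real Nat

theorem Real.Wallis.W_eq_centralBinom (n : ℕ) :
    Wallis.W n = 16 ^ n / ((centralBinom n : ℝ) ^ 2 * (2 * n + 1)) := by
  have hfact : ((2 * n)! : ℝ) = centralBinom n * n ! * n ! := by
    rw [centralBinom_eq_two_mul_choose]
    exact_mod_cast (Nat.choose_mul_factorial_mul_factorial (by omega : n ≤ 2 * n)).symm.trans
      (by rw [show 2 * n - n = n by omega])
  rw [Wallis.W_eq_factorial_ratio, hfact, pow_mul, show (2 : ℝ) ^ 4 = 16 by norm_num]
  have : (n ! : ℝ) ≠ 0 := by positivity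
  field_simp

theorem Nat.centralBinom_sq_mul_pi_mul_lt (n : ℕ) :
    (centralBinom n : ℝ) ^ 2 * (π * n) < 16 ^ n := by
  have hC : (0 : ℝ) < centralBinom n := by exact_mod_cast centralBinom_pos n
  have hW := Wallis.le_W n
  rw [Wallis.W_eq_centralBinom, le_div_iff₀ (by positivity)] at hW
  have hsplit : (2 * n + 1) / (2 * n + 2) * (π / 2) * ((centralBinom n : ℝ) ^ 2 * (2 * n + 1)) =
      (centralBinom n : ℝ) ^ 2 * (π * n) + (centralBinom n : ℝ) ^ 2 * π / (4 * (n + 1)) := by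
    field_simp
    ring
  have hpos : 0 < (centralBinom n : ℝ) ^ 2 * π / (4 * (n + 1)) := by positivity
  linarith

theorem Nat.centralBinom_mul_sqrt_pi_mul_lt (n : ℕ) :
    (centralBinom n : ℝ) * √(π * n) < 4 ^ n := by
  apply lt_of_pow_lt_pow_left₀ 2 (by positivity)
  rw [mul_pow, sq_sqrt (by positivity), ← pow_mul, mul_comm n 2, pow_mul]
  norm_num
  exact centralBinom_sq_mul_pi_mul_lt n

theorem Nat.centralBinom_succ_eq_two_mul_choose (m : ℕ) :
    centralBinom (m + 1) = 2 * (2 * m + 1).choose m := by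
  rw [centralBinom_eq_two_mul_choose, show 2 * (m + 1) = 2 * m + 1 + 1 by ring,
    choose_succ_succ, choose_symm_half, ← two_mul]

theorem Nat.choose_div_two_mul_sqrt_pi_mul_lt (k : ℕ) :
    (k.choose (k / 2) : ℝ) * √(π * ((k + 1) / 2 : ℕ)) < 2 ^ k := by
  obtain ⟨n, rfl | rfl⟩ := Nat.even_or_odd' k
  · rw [show 2 * n / 2 = n by omega, show (2 * n + 1) / 2 = n by omega, pow_mul,
      ← centralBinom_eq_two_mul_choose, show (2 : ℝ) ^ 2 = 4 by norm_num]
    exact centralBinom_mul_sqrt_pi_mul_lt n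
  · rw [show (2 * n + 1) / 2 = n by omega, show (2 * n + 1 + 1) / 2 = n + 1 by omega]
    have h := centralBinom_mul_sqrt_pi_mul_lt (n + 1)
    rw [centralBinom_succ_eq_two_mul_choose, pow_succ, Nat.cast_mul, Nat.cast_two] at h
    rw [pow_succ, pow_mul, show (2 : ℝ) ^ 2 = 4 by norm_num]
    linarith

/-- For every `k ≥ 1`, the central binomial coefficient satisfies
`C(k, ⌊k/2⌋) < 2^k / √(π · ⌈k/2⌉)`. -/
theorem central_binom_upper_bound (k : ℕ) (hk : 1 ≤ k) :
    (k.choose (k / 2) : ℝ) <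
      2 ^ k / Real.sqrt (Real.pi * (((k + 1) / 2 : ℕ) : ℝ)) := by
  have hhalf : (0 : ℝ) < ((k + 1) / 2 : ℕ) := by
    exact_mod_cast Nat.div_pos (by omega) two_pos
  rw [lt_div_iff₀ (by positivity)]
  exact choose_div_two_mul_sqrt_pi_mul_lt k
end

section
/- Let k ∈ ℕ and t ∈ ℕ with 2t - 1 ≥ 1 and ⌊k/2⌋ - 2t + 1 ≥ 0. Then C(k, ⌊k/2⌋ - 2t + 1) ≥ C(k, ⌊k/2⌋) · ( (⌊k/2⌋ - 2t + 2) / (⌈k/2⌉ + 1) )^{2t-1}. -/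
/-!
Write `u = ⌊k/2⌋ - s + 1`, `A = ⌈k/2⌉ + 1` with `s = 2t - 1`. Clearing factorials,
`C(k, ⌊k/2⌋ - s) / C(k, ⌊k/2⌋) = ∏_{i<s} (u + i) / (A + i)`, and since `u ≤ A` every factor is at
least `u / A`.
-/

namespace Nat

theorem add_choose_mul_ascFactorial (j s b : ℕ) :
    (j + s + b).choose (j + s) * (j + 1).ascFactorial s =
      (j + s + b).choose j * (b + 1).ascFactorial s := by
  have hleft := choose_mul_factorial_mul_factorial (n := j + s + b) (k := j + s) (by omega)
  have hright := choose_mul_factorial_mul_factorial (n := j + s + b) (k := j) (by omega)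
  rw [show j + s + b - (j + s) = b by omega, ← factorial_mul_ascFactorial j s] at hleft
  rw [show j + s + b - j = b + s by omega, ← factorial_mul_ascFactorial b s] at hright
  have hpos : 0 < j ! * b ! := by positivity
  apply Nat.eq_of_mul_eq_mul_right hpos
  calc _ = (j + s + b).choose (j + s) * (j ! * (j + 1).ascFactorial s) * b ! := by ring
    _ = (j + s + b).choose j * j ! * (b ! * (b + 1).ascFactorial s) := by rw [hleft, hright]
    _ = _ := by ring

theorem pow_mul_ascFactorial_le {u A : ℕ} (huA : u ≤ A) (s : ℕ) :
    u ^ s * A.ascFactorial s ≤ A ^ s * u.ascFactorial s := by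
  induction s with
  | zero => simp
  | succ s ih =>
    have hstep : u * (A + s) ≤ A * (u + s) := by nlinarith
    calc u ^ (s + 1) * A.ascFactorial (s + 1)
        = (u * (A + s)) * (u ^ s * A.ascFactorial s) := by rw [ascFactorial_succ]; ring
      _ ≤ (A * (u + s)) * (A ^ s * u.ascFactorial s) := Nat.mul_le_mul hstep ih
      _ = A ^ (s + 1) * u.ascFactorial (s + 1) := by rw [ascFactorial_succ]; ring

theorem add_choose_mul_pow_le {j b : ℕ} (hjb : j ≤ b) (s : ℕ) :
    (j + s + b).choose (j + s) * (j + 1) ^ s ≤ (j + s + b).choose j * (b + 1) ^ s := by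
  have hpos : 0 < (b + 1).ascFactorial s := ascFactorial_pos _ _
  refine Nat.le_of_mul_le_mul_right ?_ hpos
  calc (j + s + b).choose (j + s) * (j + 1) ^ s * (b + 1).ascFactorial s
      ≤ (j + s + b).choose (j + s) * ((b + 1) ^ s * (j + 1).ascFactorial s) := by
        rw [mul_assoc]
        exact Nat.mul_le_mul_left _ (pow_mul_ascFactorial_le (by omega) s)
    _ = (j + s + b).choose j * (b + 1) ^ s * (b + 1).ascFactorial s := by
        rw [mul_left_comm, add_choose_mul_ascFactorial]; ring

end Nat

/-- For `k, t ∈ ℕ` with `2t - 1 ≥ 1` and `⌊k/2⌋ - 2t + 1 ≥ 0`,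
`C(k, ⌊k/2⌋ - 2t + 1) ≥ C(k, ⌊k/2⌋) · ((⌊k/2⌋ - 2t + 2)/(⌈k/2⌉ + 1))^{2t-1}`. -/
theorem binom_shift_lower_bound (k t : ℕ) (ht : 1 ≤ 2 * t - 1) (hkt : 2 * t - 1 ≤ k / 2) :
    (k.choose (k / 2 - (2 * t - 1)) : ℝ) ≥
      (k.choose (k / 2) : ℝ) *
        ((((k / 2 : ℕ) : ℝ) - 2 * (t : ℝ) + 2) / ((((k + 1) / 2 : ℕ) : ℝ) + 1)) ^ (2 * t - 1) := by
  obtain ⟨j, hj⟩ : ∃ j, k / 2 = j + (2 * t - 1) := ⟨k / 2 - (2 * t - 1), by omega⟩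
  have hjs : k / 2 - (2 * t - 1) = j := by omega
  have hk : k = j + (2 * t - 1) + (k + 1) / 2 := by omega
  have hbase : ((k / 2 : ℕ) : ℝ) - 2 * (t : ℝ) + 2 = ((j + 1 : ℕ) : ℝ) := by
    rw [hj, Nat.cast_add, Nat.cast_sub (by omega)]
    push_cast
    ring
  have key := Nat.add_choose_mul_pow_le (j := j) (b := (k + 1) / 2) (by omega) (2 * t - 1)
  rw [← hk, ← hj] at key
  rw [hbase, hjs, ge_iff_le, div_pow, ← mul_div_assoc, div_le_iff₀ (by positivity)]
  exact_mod_cast key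
end

section
/- Let Z_1, …, Z_k be i.i.d. Rademacher random variables and X := Σ_{i=1}^k Z_i. Let ε > 0, set k' := ⌊ε⌋ + 1, and assume k' ≤ k. Then for every a ∈ ℝ, P( |X - a| > ε ) ≥ 2^{-k} · [ Σ_{j=0}^{⌊(k - k')/2⌋} C(k,j) + Σ_{j=⌈(k + k' + 1)/2⌉}^{k} C(k,j) ]. -/
/-!
On the event that `Z` has sign pattern `S = {i | Z i = 1}`, which has probability `2⁻¹ ^ k`, the
sum equals `2 #S - k`; hence `P(|X - a| > ε)` is at least `2⁻¹ ^ k` times the sum of `C(k, j)`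
over the `j` with `|2 j - k - a| > ε`. The remaining `j` lie in a window of `⌊ε⌋ + 1`
consecutive integers, and by unimodality of the binomial coefficients no such window carries
more mass than the central one, whose complement consists of the two tails.
-/

open MeasureTheory ProbabilityTheory Finset Function
open scoped ENNReal

theorem Nat.apply_le_apply_of_le_succ_of_succ_le {α : Type*} [Preorder α] {f : ℕ → α} {L : ℕ}
    (hinc : ∀ m < L, f m ≤ f (m + 1)) (hdec : ∀ m ≥ L, f (m + 1) ≤ f m) (m : ℕ) :
    f m ≤ f L := by
  rcases le_total m L with hm | hm
  · exact monotoneOn_of_le_add_one Set.ordConnected_Iic (fun a _ _ ha => hinc a ha)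
      (Set.mem_Iic.2 hm) (Set.mem_Iic.2 le_rfl) hm
  · exact antitoneOn_nat_Ici_of_succ_le hdec (le_refl L) hm hm

theorem Nat.choose_le_choose_of_add_le {n a b : ℕ} (hab : a ≤ b) (h : a + b ≤ n) :
    n.choose a ≤ n.choose b := by
  have hmono : MonotoneOn n.choose (Set.Iic (n / 2)) :=
    monotoneOn_of_le_add_one Set.ordConnected_Iic fun r _ _ hr =>
      Nat.choose_le_succ_of_lt_half_left hr
  rcases le_or_gt (2 * b) n with hb | hb
  · exact hmono (Set.mem_Iic.2 (by omega)) (Set.mem_Iic.2 (by omega)) hab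
  · rw [← Nat.choose_symm (by omega : b ≤ n)]
    exact hmono (Set.mem_Iic.2 (by omega)) (Set.mem_Iic.2 (by omega)) (by omega)

theorem Nat.choose_le_choose_of_lt_add {n a b : ℕ} (hab : a ≤ b) (h : n < a + b) :
    n.choose b ≤ n.choose a := by
  rcases le_or_gt b n with hb | hb
  · rw [← Nat.choose_symm hb]
    exact Nat.choose_le_choose_of_add_le (by omega) (by omega)
  · simp [Nat.choose_eq_zero_of_lt hb]

theorem Finset.sum_Ico_add_eq_add_sum_Ico {M : Type*} [AddCommMonoid M] (f : ℕ → M) (m w : ℕ) :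
    ∑ j ∈ Ico m (m + w), f j + f (m + w) = f m + ∑ j ∈ Ico (m + 1) (m + 1 + w), f j := by
  rw [add_right_comm m 1 w, ← sum_eq_sum_Ico_succ_bot (by omega), ← sum_Ico_succ_top (by omega)]

theorem Nat.sum_Ico_choose_le_sum_Ico_choose_central {n w : ℕ} (hw : w ≤ n) (m : ℕ) :
    ∑ j ∈ Ico m (m + w), n.choose j ≤
      ∑ j ∈ Ico ((n - w) / 2 + 1) ((n - w) / 2 + 1 + w), n.choose j := by
  refine Nat.apply_le_apply_of_le_succ_of_succ_le
    (f := fun m => ∑ j ∈ Ico m (m + w), n.choose j) (fun m hm => ?_) (fun m hm => ?_) m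
  all_goals have hstep := sum_Ico_add_eq_add_sum_Ico n.choose m w
  · have := Nat.choose_le_choose_of_add_le (n := n) (Nat.le_add_right m w) (by omega)
    omega
  · have := Nat.choose_le_choose_of_lt_add (n := n) (Nat.le_add_right m w) (by omega)
    omega

theorem Nat.sum_range_choose_add_sum_Icc_choose_le {n w b : ℕ} (hw : w ≤ n) (p : ℕ → Prop)
    [DecidablePred p] (hp : ∀ j ≤ n, ¬ p j → j ∈ Ico b (b + w)) :
    ∑ j ∈ range ((n - w) / 2 + 1), n.choose j + ∑ j ∈ Icc ((n + w + 2) / 2) n, n.choose j ≤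
      ∑ j ∈ range (n + 1) with p j, n.choose j := by
  have htotal : ∑ j ∈ range ((n - w) / 2 + 1), n.choose j +
      ∑ j ∈ Ico ((n - w) / 2 + 1) ((n - w) / 2 + 1 + w), n.choose j +
      ∑ j ∈ Icc ((n + w + 2) / 2) n, n.choose j = 2 ^ n := by
    rw [← Ico_add_one_right_eq_Icc, (by omega : (n + w + 2) / 2 = (n - w) / 2 + 1 + w),
      range_eq_Ico,
      sum_Ico_consecutive _ (by omega) (by omega), sum_Ico_consecutive _ (by omega) (by omega),
      ← range_eq_Ico, Nat.sum_range_choose]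
  have hsplit := sum_filter_add_sum_filter_not (range (n + 1)) p n.choose
  rw [Nat.sum_range_choose] at hsplit
  have hbad : ∑ j ∈ range (n + 1) with ¬ p j, n.choose j ≤ ∑ j ∈ Ico b (b + w), n.choose j :=
    sum_le_sum_of_subset fun j hj => by
      rw [mem_filter, mem_range] at hj
      exact hp j (by omega) hj.2
  have := Nat.sum_Ico_choose_le_sum_Ico_choose_central hw b
  omega

theorem Nat.mem_Ico_ceil_of_le_of_le {x r : ℝ} {j : ℕ} (hxj : x ≤ j) (hjx : (j : ℝ) ≤ x + r) :
    j ∈ Ico ⌈x⌉₊ (⌈x⌉₊ + (⌊r⌋₊ + 1)) := by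
  have hceil : ⌈x⌉₊ ≤ j := Nat.ceil_le.2 hxj
  have : j - ⌈x⌉₊ ≤ ⌊r⌋₊ := Nat.le_floor <| by
    rw [Nat.cast_sub hceil]
    linarith [Nat.le_ceil x]
  exact mem_Ico.2 ⟨hceil, by omega⟩

section SignPattern

variable {Ω ι : Type*} [DecidableEq ι] {Z : ι → Ω → ℝ}

def signEvent (Z : ι → Ω → ℝ) (S : Finset ι) : Set Ω :=
  ⋂ i, Z i ⁻¹' {if i ∈ S then 1 else -1}

theorem pairwise_disjoint_signEvent : Pairwise (Disjoint on signEvent Z) := by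
  intro S T hST
  obtain ⟨i, hi⟩ := not_forall.1 (mt Finset.ext hST)
  refine Set.disjoint_left.2 fun ω hS hT => hi ?_
  have hSi := Set.mem_iInter.1 hS i
  have hTi := Set.mem_iInter.1 hT i
  simp only [Set.mem_preimage, Set.mem_singleton_iff] at hSi hTi
  split_ifs at hSi hTi with hS hT hT
  all_goals first | tauto | (rw [hSi] at hTi; norm_num at hTi)

theorem sum_eq_of_mem_signEvent [Fintype ι] {S : Finset ι} {ω : Ω} (h : ω ∈ signEvent Z S) :
    ∑ i, Z i ω = 2 * #S - Fintype.card ι := by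
  have hZ : ∀ i, Z i ω = if i ∈ S then 1 else -1 := fun i => Set.mem_iInter.1 h i
  have hcard := card_filter_add_card_filter_not (s := univ) (· ∈ S)
  rw [filter_mem_eq_inter, univ_inter, card_univ] at hcard
  simp only [hZ, sum_ite, sum_const, nsmul_eq_mul, mul_one, mul_neg, filter_mem_eq_inter,
    univ_inter, ← hcard]
  push_cast
  ring

variable [MeasurableSpace Ω] {μ : Measure Ω} [Fintype ι]

theorem measurableSet_signEvent (hmeas : ∀ i, Measurable (Z i)) (S : Finset ι) :
    MeasurableSet (signEvent Z S) :=
  .iInter fun i => hmeas i (measurableSet_singleton _)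

theorem measure_signEvent (hindep : iIndepFun Z μ) (hpos : ∀ i, μ {ω | Z i ω = 1} = 1 / 2)
    (hneg : ∀ i, μ {ω | Z i ω = -1} = 1 / 2) (S : Finset ι) :
    μ (signEvent Z S) = 2⁻¹ ^ Fintype.card ι := by
  rw [signEvent, hindep.meas_iInter fun i => ⟨_, measurableSet_singleton _, rfl⟩,
    ← card_univ, ← prod_const]
  refine prod_congr rfl fun i _ => ?_
  split_ifs
  · exact (hpos i).trans (one_div 2)
  · exact (hneg i).trans (one_div 2)

theorem sum_choose_mul_le_measure_setOf_sum (hmeas : ∀ i, Measurable (Z i))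
    (hindep : iIndepFun Z μ) (hpos : ∀ i, μ {ω | Z i ω = 1} = 1 / 2)
    (hneg : ∀ i, μ {ω | Z i ω = -1} = 1 / 2) (p : ℝ → Prop) [DecidablePred p] :
    ((∑ j ∈ range (Fintype.card ι + 1) with p (2 * ((j : ℕ) : ℝ) - Fintype.card ι),
        (Fintype.card ι).choose j : ℕ) : ℝ≥0∞) * 2⁻¹ ^ Fintype.card ι ≤
      μ {ω | p (∑ i, Z i ω)} := by
  set n := Fintype.card ι
  calc ((∑ j ∈ range (n + 1) with p (2 * ((j : ℕ) : ℝ) - n), n.choose j : ℕ) : ℝ≥0∞) * 2⁻¹ ^ n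
      = ∑ m ∈ range (n + 1), n.choose m • if p (2 * m - n) then (2⁻¹ : ℝ≥0∞) ^ n else 0 := by
        rw [sum_filter, Nat.cast_sum, sum_mul]
        refine sum_congr rfl fun m _ => ?_
        split_ifs <;> simp [nsmul_eq_mul]
    _ = ∑ S : Finset ι, if p (2 * (#S : ℝ) - n) then (2⁻¹ : ℝ≥0∞) ^ n else 0 := by
        rw [← powerset_univ]
        exact (sum_powerset_apply_card _).symm
    _ = ∑ S : Finset ι with p (2 * (#S : ℝ) - n), μ (signEvent Z S) := by
        rw [sum_filter]
        exact sum_congr rfl fun S _ => by rw [measure_signEvent hindep hpos hneg]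
    _ = μ (⋃ S ∈ univ.filter fun S : Finset ι => p (2 * (#S : ℝ) - n), signEvent Z S) :=
        (measure_biUnion_finset (pairwise_disjoint_signEvent.set_pairwise _)
          fun S _ => measurableSet_signEvent hmeas S).symm
    _ ≤ μ {ω | p (∑ i, Z i ω)} := measure_mono <| Set.iUnion₂_subset fun S hS ω hω => by
        rw [mem_filter] at hS
        rw [Set.mem_ofPred_eq, sum_eq_of_mem_signEvent hω]
        exact hS.2

end SignPattern

theorem rademacher_sum_anticoncentration_binom_general {Ω : Type*} [MeasurableSpace Ω]
    (μ : Measure Ω)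
    (k : ℕ) (Z : Fin k → Ω → ℝ) (hmeas : ∀ i, Measurable (Z i))
    (hindep : iIndepFun Z μ)
    (hpos : ∀ i, μ {ω | Z i ω = 1} = 1 / 2)
    (hneg : ∀ i, μ {ω | Z i ω = -1} = 1 / 2)
    (ε : ℝ) (hk' : ⌊ε⌋₊ + 1 ≤ k) (a : ℝ) :
    μ {ω | |(∑ i, Z i ω) - a| > ε} ≥
      ENNReal.ofReal ((2 : ℝ)⁻¹ ^ k *
        ((∑ j ∈ Finset.range ((k - (⌊ε⌋₊ + 1)) / 2 + 1), (k.choose j : ℝ)) +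
          ∑ j ∈ Finset.Icc ((k + (⌊ε⌋₊ + 1) + 2) / 2) k, (k.choose j : ℝ))) := by
  have hbad : ∀ j ≤ k, ¬ ε < |2 * (j : ℝ) - k - a| →
      j ∈ Ico ⌈(k + a - ε) / 2⌉₊ (⌈(k + a - ε) / 2⌉₊ + (⌊ε⌋₊ + 1)) := by
    intro j _ hj
    rw [not_lt, abs_le] at hj
    exact Nat.mem_Ico_ceil_of_le_of_le (by linarith) (by linarith)
  have hcount := Nat.sum_range_choose_add_sum_Icc_choose_le hk' _ hbad
  have hprob := sum_choose_mul_le_measure_setOf_sum hmeas hindep hpos hneg (fun x => ε < |x - a|)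
  rw [Fintype.card_fin] at hprob
  calc ENNReal.ofReal ((2 : ℝ)⁻¹ ^ k *
        ((∑ j ∈ range ((k - (⌊ε⌋₊ + 1)) / 2 + 1), (k.choose j : ℝ)) +
          ∑ j ∈ Icc ((k + (⌊ε⌋₊ + 1) + 2) / 2) k, (k.choose j : ℝ)))
      = ((∑ j ∈ range ((k - (⌊ε⌋₊ + 1)) / 2 + 1), k.choose j +
          ∑ j ∈ Icc ((k + (⌊ε⌋₊ + 1) + 2) / 2) k, k.choose j : ℕ) : ℝ≥0∞) * 2⁻¹ ^ k := by
        rw [← Nat.cast_sum, ← Nat.cast_sum, ← Nat.cast_add, mul_comm,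
          ENNReal.ofReal_mul (Nat.cast_nonneg _), ENNReal.ofReal_natCast,
          ENNReal.ofReal_pow (by norm_num), ENNReal.ofReal_inv_of_pos (by norm_num),
          ENNReal.ofReal_ofNat]
    _ ≤ _ := by gcongr
    _ ≤ μ {ω | |(∑ i, Z i ω) - a| > ε} := hprob

/-- For i.i.d. Rademacher variables `Z_1,…,Z_k`, `X := Σ Z_i`, `ε > 0`,
`k' := ⌊ε⌋ + 1 ≤ k`, and any `a ∈ ℝ`:
`P(|X - a| > ε) ≥ 2^{-k}·[Σ_{j=0}^{⌊(k-k')/2⌋} C(k,j) + Σ_{j=⌈(k+k'+1)/2⌉}^k C(k,j)]`. -/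
theorem rademacher_sum_anticoncentration_binom {Ω : Type*} [MeasurableSpace Ω]
    (μ : Measure Ω) [IsProbabilityMeasure μ]
    (k : ℕ) (Z : Fin k → Ω → ℝ) (hmeas : ∀ i, Measurable (Z i))
    (hindep : iIndepFun Z μ)
    (hpos : ∀ i, μ {ω | Z i ω = 1} = 1 / 2)
    (hneg : ∀ i, μ {ω | Z i ω = -1} = 1 / 2)
    (ε : ℝ) (hε : 0 < ε) (hk' : ⌊ε⌋₊ + 1 ≤ k) (a : ℝ) :
    μ {ω | |(∑ i, Z i ω) - a| > ε} ≥
      ENNReal.ofReal ((2 : ℝ)⁻¹ ^ k *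
        ((∑ j ∈ Finset.range ((k - (⌊ε⌋₊ + 1)) / 2 + 1), (k.choose j : ℝ)) +
          ∑ j ∈ Finset.Icc ((k + (⌊ε⌋₊ + 1) + 2) / 2) k, (k.choose j : ℝ))) :=
  rademacher_sum_anticoncentration_binom_general μ k Z hmeas hindep hpos hneg ε hk' a
end

section
/- Let Z_1, …, Z_k be i.i.d. Rademacher random variables and X := Σ_{i=1}^k Z_i. Let ε > 0, set k' := ⌊ε⌋ + 1, and assume k' ≤ k. Then for every a ∈ ℝ, P( |X - a| > ε ) ≥ 2^{-k'}. -/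
/-!
Fix a set `S` of `n = ⌊ε⌋₊ + 1` coordinates and let `T = ∑_{i ∉ S} Z i`, which is independent of
`(Z i)_{i ∈ S}`. If `T ≥ a`, then `Z ≡ 1` on `S` gives `X - a ≥ n > ε`; if `T < a`, then `Z ≡ -1`
on `S` gives `X - a < -n < -ε`. Each sign pattern has probability `2⁻ⁿ` independently of `T`, so
the probability of `|X - a| > ε` is at least `2⁻ⁿ (P(T ≥ a) + P(T < a)) = 2⁻ⁿ`.
-/

open MeasureTheory ProbabilityTheory Finset

section Probability

variable {Ω : Type*} [MeasurableSpace Ω] {μ : Measure Ω}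

theorem ProbabilityTheory.IndepSet.measure_inter_union_inter_compl [IsProbabilityMeasure μ]
    {A₁ A₂ B : Set Ω} (h₁ : IndepSet A₁ B μ) (h₂ : IndepSet A₂ Bᶜ μ) (hA₂ : MeasurableSet A₂)
    (hB : MeasurableSet B) (hA : μ A₁ = μ A₂) :
    μ (A₁ ∩ B ∪ A₂ ∩ Bᶜ) = μ A₁ := by
  have hdisj : Disjoint (A₁ ∩ B) (A₂ ∩ Bᶜ) :=
    disjoint_compl_right.mono Set.inter_subset_right Set.inter_subset_right
  rw [measure_union hdisj (hA₂.inter hB.compl), h₁.measure_inter_eq_mul,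
    h₂.measure_inter_eq_mul, ← hA, ← mul_add, measure_add_measure_compl hB, measure_univ, mul_one]

theorem ProbabilityTheory.IndepFun.indepSet_preimage {β γ : Type*} [MeasurableSpace β]
    [MeasurableSpace γ] {f : Ω → β} {g : Ω → γ} (h : IndepFun f g μ) {s : Set β} {t : Set γ}
    (hs : MeasurableSet s) (ht : MeasurableSet t) : IndepSet (f ⁻¹' s) (g ⁻¹' t) μ :=
  Indep.indepSet_of_measurableSet h ⟨s, hs, rfl⟩ ⟨t, ht, rfl⟩

variable {ι : Type*}

theorem ProbabilityTheory.iIndepFun.measure_forall_mem_eq {β : Type*} [MeasurableSpace β]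
    [MeasurableSingletonClass β] {Z : ι → Ω → β} (h : iIndepFun Z μ) (S : Finset ι) {c : β}
    {p : ENNReal} (hp : ∀ i, μ {ω | Z i ω = c} = p) :
    μ {ω | ∀ i ∈ S, Z i ω = c} = p ^ #S := by
  have hinter : {ω | ∀ i ∈ S, Z i ω = c} = ⋂ i ∈ S, Z i ⁻¹' {c} := by ext; simp
  rw [hinter, h.measure_inter_preimage_eq_mul S fun _ _ => measurableSet_singleton c]
  exact prod_eq_pow_card fun i _ => hp i

theorem ProbabilityTheory.iIndepFun.indepSet_forall_mem_eq_sum_compl_mem [Fintype ι]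
    [DecidableEq ι] {Z : ι → Ω → ℝ} (h : iIndepFun Z μ) (hZ : ∀ i, Measurable (Z i))
    (S : Finset ι) (c : ℝ) {s : Set ℝ} (hs : MeasurableSet s) :
    IndepSet {ω | ∀ i ∈ S, Z i ω = c} {ω | ∑ i ∈ Sᶜ, Z i ω ∈ s} μ := by
  have := (h.indepFun_finset S Sᶜ disjoint_compl_right hZ).indepSet_preimage
    (MeasurableSet.univ_pi fun _ => measurableSet_singleton c)
    (hs.preimage (Finset.measurable_sum univ fun i _ => measurable_pi_apply i))
  convert this using 1 <;> ext ω <;> simp [sum_attach Sᶜ (fun i => Z i ω)]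

end Probability

section SignedSums

variable {ι : Type*} [Fintype ι] [DecidableEq ι]

theorem sum_eq_card_mul_add_sum_compl {R : Type*} [NonAssocSemiring R] {f : ι → R}
    {S : Finset ι} {c : R} (hS : ∀ i ∈ S, f i = c) :
    ∑ i, f i = #S * c + ∑ i ∈ Sᶜ, f i := by
  rw [← sum_add_sum_compl S, sum_congr rfl hS, sum_const, nsmul_eq_mul]

theorem lt_abs_sum_sub_of_eq_one_or_eq_neg_one {f : ι → ℝ} {S : Finset ι} {ε a : ℝ}
    (hε : ε < #S)
    (hf : (∀ i ∈ S, f i = 1) ∧ a ≤ ∑ i ∈ Sᶜ, f i ∨ (∀ i ∈ S, f i = -1) ∧ ¬a ≤ ∑ i ∈ Sᶜ, f i) :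
    ε < |∑ i, f i - a| := by
  rcases hf with ⟨hS, ha⟩ | ⟨hS, ha⟩
  · rw [sum_eq_card_mul_add_sum_compl hS]
    exact lt_abs.2 (Or.inl (by linarith))
  · rw [sum_eq_card_mul_add_sum_compl hS]
    exact lt_abs.2 (Or.inr (by linarith))

end SignedSums

theorem rademacher_sum_anticoncentration_simple_general {Ω : Type*} [MeasurableSpace Ω]
    (μ : Measure Ω) [IsProbabilityMeasure μ]
    (k : ℕ) (Z : Fin k → Ω → ℝ) (hmeas : ∀ i, Measurable (Z i))
    (hindep : iIndepFun Z μ)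
    (hpos : ∀ i, μ {ω | Z i ω = 1} = 1 / 2)
    (hneg : ∀ i, μ {ω | Z i ω = -1} = 1 / 2)
    (ε : ℝ) (hk' : ⌊ε⌋₊ + 1 ≤ k) (a : ℝ) :
    μ {ω | |(∑ i, Z i ω) - a| > ε} ≥ ENNReal.ofReal ((2 : ℝ)⁻¹ ^ (⌊ε⌋₊ + 1)) := by
  obtain ⟨S, -, hS⟩ : ∃ S ⊆ (univ : Finset (Fin k)), #S = ⌊ε⌋₊ + 1 :=
    exists_subset_card_eq (by simpa using hk')
  have hεS : ε < #S := by rw [hS]; exact_mod_cast Nat.lt_floor_add_one ε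
  set B := {ω | ∑ i ∈ Sᶜ, Z i ω ∈ Set.Ici a}
  have hB : MeasurableSet B := measurableSet_Ici.preimage (measurable_sum _ fun i _ => hmeas i)
  have hsigns : μ ({ω | ∀ i ∈ S, Z i ω = 1} ∩ B ∪ {ω | ∀ i ∈ S, Z i ω = -1} ∩ Bᶜ)
      = 2⁻¹ ^ (⌊ε⌋₊ + 1) := by
    rw [(hindep.indepSet_forall_mem_eq_sum_compl_mem hmeas S 1 measurableSet_Ici
        ).measure_inter_union_inter_compl
        (hindep.indepSet_forall_mem_eq_sum_compl_mem hmeas S (-1) measurableSet_Ici.compl)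
        (by measurability) hB
        (by rw [hindep.measure_forall_mem_eq S hpos, hindep.measure_forall_mem_eq S hneg]),
      hindep.measure_forall_mem_eq S hpos, hS, one_div]
  calc ENNReal.ofReal ((2 : ℝ)⁻¹ ^ (⌊ε⌋₊ + 1)) = 2⁻¹ ^ (⌊ε⌋₊ + 1) := by simp [ENNReal.inv_pow]
    _ = _ := hsigns.symm
    _ ≤ _ := measure_mono fun ω hω => lt_abs_sum_sub_of_eq_one_or_eq_neg_one hεS hω

/-- For i.i.d. Rademacher variables `Z_1,…,Z_k`, `X := Σ Z_i`, `ε > 0`,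
`k' := ⌊ε⌋ + 1 ≤ k`, and every `a ∈ ℝ`: `P(|X - a| > ε) ≥ 2^{-k'}`. -/
theorem rademacher_sum_anticoncentration_simple {Ω : Type*} [MeasurableSpace Ω]
    (μ : Measure Ω) [IsProbabilityMeasure μ]
    (k : ℕ) (Z : Fin k → Ω → ℝ) (hmeas : ∀ i, Measurable (Z i))
    (hindep : iIndepFun Z μ)
    (hpos : ∀ i, μ {ω | Z i ω = 1} = 1 / 2)
    (hneg : ∀ i, μ {ω | Z i ω = -1} = 1 / 2)
    (ε : ℝ) (hε : 0 < ε) (hk' : ⌊ε⌋₊ + 1 ≤ k) (a : ℝ) :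
    μ {ω | |(∑ i, Z i ω) - a| > ε} ≥ ENNReal.ofReal ((2 : ℝ)⁻¹ ^ (⌊ε⌋₊ + 1)) :=
  rademacher_sum_anticoncentration_simple_general μ k Z hmeas hindep hpos hneg ε hk' a
end

section
/- Let N, M, n be natural numbers with M ≤ N and N ≥ 4n. Then the number of M-element subsets I of {1, …, N} satisfying #(I ∩ {1, …, n}) ≤ M/2 is at least (1/2)·C(N, M). Equivalently, if I is a uniformly random M-element subset of {1, …, N}, then P( #(I ∩ {1, …, n}) ≤ M/2 ) ≥ 1/2. -/
/-!
Let `σ` exchange the blocks `{1,…,n}` and `{n+1,…,2n}` of `{1,…,N}` (possible as `2n ≤ N`).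
If `#(I ∩ {1,…,n}) > M/2`, then `σ(I)` meets `{1,…,n}` in `#(I ∩ {n+1,…,2n}) < M/2` points,
so `I ↦ σ(I)` injects the bad `M`-subsets into the good ones, and the good ones are at least half.
-/

open Finset

section Swap

variable {α : Type*} [DecidableEq α]

lemma card_inter_add_card_inter_le {A B : Finset α} (hAB : Disjoint A B) (I : Finset α) :
    #(I ∩ A) + #(I ∩ B) ≤ #I := by
  rw [← card_union_of_disjoint (hAB.mono inter_subset_right inter_subset_right),
    ← inter_union_distrib_left]
  exact card_le_card inter_subset_left

lemma card_image_inter_eq_card_inter {σ : α → α} (hσ : σ.Injective) {A B : Finset α}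
    (hσAB : ∀ x, σ x ∈ A ↔ x ∈ B) (I : Finset α) : #(I.image σ ∩ A) = #(I ∩ B) := by
  rw [← filter_mem_eq_inter, filter_image, card_image_of_injective _ hσ, ← filter_mem_eq_inter]
  simp only [hσAB]

theorem choose_le_two_mul_card_filter_card_inter_le {U A B : Finset α} (hAB : Disjoint A B)
    {σ : α → α} (hσ : σ.Injective) (hσU : ∀ x ∈ U, σ x ∈ U) (hσAB : ∀ x, σ x ∈ A ↔ x ∈ B)
    (M : ℕ) : (#U).choose M ≤ 2 * #((U.powersetCard M).filter fun I => 2 * #(I ∩ A) ≤ M) := by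
  set s := U.powersetCard M
  have bad_le_good :
      #(s.filter fun I => ¬ 2 * #(I ∩ A) ≤ M) ≤ #(s.filter fun I => 2 * #(I ∩ A) ≤ M) := by
    refine card_le_card_of_injOn (image σ) ?_ (Finset.image_injective hσ).injOn
    intro I hI
    simp only [coe_filter, Set.mem_ofPred_eq, s, mem_powersetCard] at hI ⊢
    obtain ⟨⟨hIU, hIcard⟩, hbad⟩ := hI
    refine ⟨⟨image_subset_iff.2 fun x hx => hσU x (hIU hx), ?_⟩, ?_⟩
    · rwa [card_image_of_injective _ hσ]
    · have := card_inter_add_card_inter_le hAB I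
      rw [card_image_inter_eq_card_inter hσ hσAB]
      omega
  have := card_filter_add_card_filter_not (s := s) fun I => 2 * #(I ∩ A) ≤ M
  rw [card_powersetCard] at this
  omega

end Swap

def blockSwap (n x : ℕ) : ℕ :=
  if x ∈ Icc 1 n then x + n else if x ∈ Icc (n + 1) (2 * n) then x - n else x

lemma blockSwap_involutive (n : ℕ) : Function.Involutive (blockSwap n) := by
  intro x
  simp only [blockSwap, mem_Icc]
  split_ifs <;> omega

lemma blockSwap_mem_Icc {n N : ℕ} (h : 2 * n ≤ N) {x : ℕ} (hx : x ∈ Icc 1 N) :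
    blockSwap n x ∈ Icc 1 N := by
  simp only [blockSwap, mem_Icc] at hx ⊢
  split_ifs <;> omega

lemma blockSwap_mem_Icc_one_iff (n x : ℕ) :
    blockSwap n x ∈ Icc 1 n ↔ x ∈ Icc (n + 1) (2 * n) := by
  simp only [blockSwap, mem_Icc]
  split_ifs <;> omega

theorem hypergeometric_median_bound_general (N M n : ℕ) (hN : 4 * n ≤ N) :
    (N.choose M : ℝ) / 2 ≤
      (((Finset.Icc 1 N).powersetCard M).filter
        (fun I => ((I ∩ Finset.Icc 1 n).card : ℝ) ≤ (M : ℝ) / 2)).card := by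
  have hdisj : Disjoint (Icc 1 n) (Icc (n + 1) (2 * n)) :=
    disjoint_left.2 fun x hx hx' => by simp only [mem_Icc] at hx hx'; omega
  have key := choose_le_two_mul_card_filter_card_inter_le hdisj (blockSwap_involutive n).injective
    (fun _ => blockSwap_mem_Icc (N := N) (by omega)) (blockSwap_mem_Icc_one_iff n) M
  rw [Nat.card_Icc, Nat.add_sub_cancel] at key
  have hfilter : ((Icc 1 N).powersetCard M).filter (fun I => 2 * #(I ∩ Icc 1 n) ≤ M) =
      ((Icc 1 N).powersetCard M).filter (fun I => (#(I ∩ Icc 1 n) : ℝ) ≤ (M : ℝ) / 2) :=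
    filter_congr fun I _ => by rw [le_div_iff₀ two_pos, mul_comm]; exact_mod_cast Iff.rfl
  rw [hfilter] at key
  rw [div_le_iff₀ two_pos, mul_comm]
  exact_mod_cast key

/-- For `M ≤ N` and `N ≥ 4n`, the number of `M`-element subsets `I` of `{1,…,N}`
with `#(I ∩ {1,…,n}) ≤ M/2` is at least `(1/2)·C(N,M)`. -/
theorem hypergeometric_median_bound (N M n : ℕ) (hMN : M ≤ N) (hN : 4 * n ≤ N) :
    (N.choose M : ℝ) / 2 ≤
      (((Finset.Icc 1 N).powersetCard M).filter
        (fun I => ((I ∩ Finset.Icc 1 n).card : ℝ) ≤ (M : ℝ) / 2)).card :=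
  hypergeometric_median_bound_general N M n hN
end

section
/- Let d ∈ ℕ, β ∈ (0,1], and let φ : ℝ^d → ℝ satisfy φ(x) = 0 for x ∉ [0,1]^d and |φ(x) - φ(z)| ≤ |x - z|_∞^β for all x, z ∈ ℝ^d. Let m ∈ ℕ, m ≥ 1, and let signs s_i ∈ {−1, +1} be given for each multi-index i ∈ {0, …, m−1}^d. Define f(x) := (1/2)·m^{-β} · Σ_{i ∈ {0,…,m−1}^d} s_i · φ(m·x − i). Then |f(x) − f(z)| ≤ |x − z|_∞^β for all x, z ∈ ℝ^d, i.e. f has Hölder-β seminorm (with respect to the maximum norm) at most 1. -/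
/-! A Hölder function vanishing off `[0,1]^d` vanishes on its boundary, so the bumps
`φ(m·x − i)` have pairwise disjoint supports. At two points `x, z` at most two bumps contribute
to `f x − f z`, each by at most `m^{-β}/2 · (m‖x − z‖)^β = ‖x − z‖^β / 2`. -/

open Set Filter Topology
open scoped Finset

lemma continuous_of_abs_sub_le_norm_rpow {E : Type*} [SeminormedAddCommGroup E] {β : ℝ}
    (hβ : 0 < β) {φ : E → ℝ} (hφ : ∀ x z, |φ x - φ z| ≤ ‖x - z‖ ^ β) : Continuous φ := by
  refine continuous_iff_continuousAt.2 fun x => ?_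
  have hlim : Tendsto (fun z => ‖z - x‖ ^ β) (𝓝 x) (𝓝 0) := by
    simpa [Real.zero_rpow hβ.ne'] using
      ((continuous_id.sub continuous_const).norm.rpow_const fun _ => Or.inr hβ.le).tendsto' x
        (‖x - x‖ ^ β) rfl
  exact tendsto_iff_norm_sub_tendsto_zero.2
    (squeeze_zero (fun _ => norm_nonneg _) (fun z => hφ z x) hlim)

lemma support_subset_interior_of_continuous {X Y : Type*} [TopologicalSpace X]
    [TopologicalSpace Y] [Zero Y] [T1Space Y] {φ : X → Y} (hφ : Continuous φ) {K : Set X}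
    (hK : ∀ x ∉ K, φ x = 0) : Function.support φ ⊆ interior K :=
  interior_maximal (fun x hx => by_contra fun h => hx (hK x h)) hφ.isOpen_support

lemma mem_Ioo_of_continuous_of_eq_zero_off_Icc {ι : Type*} [Finite ι] {a b : ι → ℝ}
    {φ : (ι → ℝ) → ℝ} (hφ : Continuous φ) (hφ0 : ∀ x ∉ Icc a b, φ x = 0) {x : ι → ℝ}
    (hx : φ x ≠ 0) (j : ι) : x j ∈ Ioo (a j) (b j) := by
  have hint := support_subset_interior_of_continuous hφ hφ0 hx
  rw [← pi_univ_Icc, interior_pi_set finite_univ] at hint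
  simpa using hint j (mem_univ j)

lemma natCast_eq_floor_of_sub_mem_Ioo {y : ℝ} {n : ℕ} (h : y - n ∈ Ioo 0 1) : n = ⌊y⌋₊ := by
  obtain ⟨h0, h1⟩ := h
  have hy : 0 ≤ y := by linarith [n.cast_nonneg (α := ℝ)]
  exact ((Nat.floor_eq_iff hy).2 ⟨by linarith, by linarith⟩).symm

lemma abs_sum_sub_sum_le_two_mul {ι X : Type*} [Fintype ι] [DecidableEq ι] {ψ : ι → X → ℝ}
    {y y' : X} (hy : #{i | ψ i y ≠ 0} ≤ 1) (hy' : #{i | ψ i y' ≠ 0} ≤ 1) {C : ℝ} (hC0 : 0 ≤ C)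
    (hC : ∀ i, |ψ i y - ψ i y'| ≤ C) : |∑ i, ψ i y - ∑ i, ψ i y'| ≤ 2 * C := by
  set S : Finset ι := ({i | ψ i y ≠ 0} : Finset ι) ∪ ({i | ψ i y' ≠ 0} : Finset ι)
  have hS : #S ≤ 2 := (Finset.card_union_le _ _).trans (add_le_add hy hy')
  have hsum : ∑ i, ψ i y - ∑ i, ψ i y' = ∑ i ∈ S, (ψ i y - ψ i y') := by
    rw [← Finset.sum_sub_distrib]
    refine (Finset.sum_subset (Finset.subset_univ S) fun i _ hi => ?_).symm
    simp_all [S]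
  calc |∑ i, ψ i y - ∑ i, ψ i y'| ≤ ∑ i ∈ S, |ψ i y - ψ i y'| :=
        hsum ▸ Finset.abs_sum_le_sum_abs _ _
    _ ≤ #S * C := by simpa using Finset.sum_le_sum fun i (_ : i ∈ S) => hC i
    _ ≤ 2 * C := by gcongr; exact_mod_cast hS

lemma abs_sum_signed_bumps_sub_le {d m : ℕ} {β : ℝ} (hβ0 : 0 < β) {φ : (Fin d → ℝ) → ℝ}
    (hφ0 : ∀ x ∉ Icc (0 : Fin d → ℝ) 1, φ x = 0) (hφH : ∀ x z, |φ x - φ z| ≤ ‖x - z‖ ^ β)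
    {s : (Fin d → Fin m) → ℝ} (hs : ∀ i, |s i| ≤ 1) (y y' : Fin d → ℝ) :
    |∑ i, s i * φ (fun j => y j - i j) - ∑ i, s i * φ (fun j => y' j - i j)| ≤
      2 * ‖y - y'‖ ^ β := by
  classical
  have hφc := continuous_of_abs_sub_le_norm_rpow hβ0 hφH
  have hfloor {i : Fin d → Fin m} {y : Fin d → ℝ} (hi : φ (fun j => y j - i j) ≠ 0) (j : Fin d) :
      (i j : ℕ) = ⌊y j⌋₊ :=
    natCast_eq_floor_of_sub_mem_Ioo
      (by simpa using mem_Ioo_of_continuous_of_eq_zero_off_Icc hφc hφ0 hi j)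
  have hdisjoint (y : Fin d → ℝ) : #{i | s i * φ (fun j => y j - i j) ≠ 0} ≤ 1 := by
    refine Finset.card_le_one.2 fun a ha b hb => ?_
    simp only [Finset.mem_filter, Finset.mem_univ, true_and, ne_eq, mul_eq_zero, not_or] at ha hb
    exact funext fun j => Fin.ext ((hfloor ha.2 j).trans (hfloor hb.2 j).symm)
  refine abs_sum_sub_sum_le_two_mul (ψ := fun i (y : Fin d → ℝ) => s i * φ (fun j => y j - i j))
    (hdisjoint y) (hdisjoint y') (by positivity) fun i => ?_
  calc |s i * φ (fun j => y j - i j) - s i * φ (fun j => y' j - i j)|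
      = |s i| * |φ (fun j => y j - i j) - φ (fun j => y' j - i j)| := by rw [← mul_sub, abs_mul]
    _ ≤ 1 * ‖(fun j => y j - i j) - (fun j => y' j - i j)‖ ^ β :=
      mul_le_mul (hs i) (hφH _ _) (abs_nonneg _) zero_le_one
    _ = ‖y - y'‖ ^ β := by rw [one_mul]; congr 2; ext; simp

theorem signed_bumps_hoelder_general (d : ℕ) (β : ℝ) (hβ0 : 0 < β)
    (φ : (Fin d → ℝ) → ℝ)
    (hφ0 : ∀ x : Fin d → ℝ, x ∉ Set.Icc (0 : Fin d → ℝ) 1 → φ x = 0)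
    (hφH : ∀ x z : Fin d → ℝ, |φ x - φ z| ≤ ‖x - z‖ ^ β)
    (m : ℕ) (hm : 1 ≤ m)
    (s : (Fin d → Fin m) → ℝ) (hs : ∀ i, s i = 1 ∨ s i = -1)
    (f : (Fin d → ℝ) → ℝ)
    (hf : ∀ x, f x = 1 / 2 * (m : ℝ) ^ (-β) *
      ∑ i : Fin d → Fin m, s i * φ (fun j => (m : ℝ) * x j - (i j : ℝ)))
    (x z : Fin d → ℝ) :
    |f x - f z| ≤ ‖x - z‖ ^ β := by
  have hm0 : (0 : ℝ) < m := by exact_mod_cast hm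
  have hs1 (i : Fin d → Fin m) : |s i| ≤ 1 := by rcases hs i with h | h <;> simp [h]
  have hsum := abs_sum_signed_bumps_sub_le hβ0 hφ0 hφH hs1 ((m : ℝ) • x) ((m : ℝ) • z)
  simp only [Pi.smul_apply, smul_eq_mul] at hsum
  rw [hf x, hf z, ← mul_sub, abs_mul, abs_of_pos (by positivity)]
  calc _ ≤ 1 / 2 * (m : ℝ) ^ (-β) * (2 * ‖(m : ℝ) • x - (m : ℝ) • z‖ ^ β) := by gcongr
    _ = ‖x - z‖ ^ β := by
      rw [← smul_sub, norm_smul, Real.norm_natCast, Real.mul_rpow hm0.le (norm_nonneg _),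
        Real.rpow_neg hm0.le]
      field_simp

/-- If `φ : ℝ^d → ℝ` vanishes outside `[0,1]^d` and has Hölder-β seminorm (w.r.t.
the max norm) at most 1, then for any `m ≥ 1` and signs `s_i ∈ {±1}`, the function
`f(x) = (1/2)·m^{-β}·Σ_{i ∈ {0,…,m-1}^d} s_i·φ(m·x - i)` also has
Hölder-β seminorm at most 1. -/
theorem signed_bumps_hoelder (d : ℕ) (β : ℝ) (hβ0 : 0 < β) (hβ1 : β ≤ 1)
    (φ : (Fin d → ℝ) → ℝ)
    (hφ0 : ∀ x : Fin d → ℝ, x ∉ Set.Icc (0 : Fin d → ℝ) 1 → φ x = 0)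
    (hφH : ∀ x z : Fin d → ℝ, |φ x - φ z| ≤ ‖x - z‖ ^ β)
    (m : ℕ) (hm : 1 ≤ m)
    (s : (Fin d → Fin m) → ℝ) (hs : ∀ i, s i = 1 ∨ s i = -1)
    (f : (Fin d → ℝ) → ℝ)
    (hf : ∀ x, f x = 1 / 2 * (m : ℝ) ^ (-β) *
      ∑ i : Fin d → Fin m, s i * φ (fun j => (m : ℝ) * x j - (i j : ℝ)))
    (x z : Fin d → ℝ) :
    |f x - f z| ≤ ‖x - z‖ ^ β :=
  signed_bumps_hoelder_general d β hβ0 φ hφ0 hφH m hm s hs f hf x z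
end

section
/- Let k be an odd natural number, let Y_1, …, Y_k be independent real random variables on a probability space, let a ∈ ℝ, ε > 0, and 0 < α < 1/2, and assume P( |Y_i − a| > ε ) ≤ α for each i = 1, …, k. Let M denote the median of Y_1, …, Y_k, i.e. the ((k+1)/2)-th smallest value among Y_1, …, Y_k. Then P( |M − a| > ε ) ≤ (1/2) · (4·α·(1−α))^{k/2}. -/
/-!
Call trial `i` a failure when `|Y i - a| > ε`. If `|M - a| > ε` then, `M` being a median, at least
`n + 1` of the `k = 2n + 1` trials fail. For independent trials, the probability that the set of
failures lies in an up-closed family is multilinear and increasing in each failure probability, so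
it is largest when all of them equal `α`. Then it is a sum over the `4 ^ n` majority sets of terms
`α ^ j (1 - α) ^ (k - j) ≤ α ^ (n + 1) (1 - α) ^ n`, and
`4 ^ n α ^ (n + 1) (1 - α) ^ n ≤ ½ (4α(1 - α)) ^ (k / 2)` because `2α ≤ √(4α(1 - α))`.
-/

open Finset

section BernoulliSetProb

variable {ι : Type*} [Fintype ι] [DecidableEq ι]

/-- The probability that the set of successes of independent trials with success probabilities `q`
belongs to `𝒜`. -/
noncomputable def bernoulliSetProb (𝒜 : Finset (Finset ι)) (q : ι → ℝ) : ℝ :=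
  ∑ S ∈ 𝒜, (∏ i ∈ S, q i) * ∏ i ∈ Sᶜ, (1 - q i)

lemma bernoulliSetProb_eq_sum_powerset_erase (𝒜 : Finset (Finset ι)) (q : ι → ℝ) (i : ι) :
    bernoulliSetProb 𝒜 q = ∑ S ∈ (univ.erase i).powerset,
      ((if insert i S ∈ 𝒜 then q i else 0) + (if S ∈ 𝒜 then 1 - q i else 0)) *
        ((∏ j ∈ S, q j) * ∏ j ∈ Sᶜ.erase i, (1 - q j)) := by
  have hsplit := sum_powerset_insert (notMem_erase i univ)
    (fun S => if S ∈ 𝒜 then (∏ j ∈ S, q j) * ∏ j ∈ Sᶜ, (1 - q j) else 0)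
  rw [insert_erase (mem_univ i), powerset_univ, sum_ite_mem, univ_inter] at hsplit
  rw [bernoulliSetProb, hsplit, ← sum_add_distrib]
  refine sum_congr rfl fun S hS => ?_
  have hiS : i ∉ S := fun h => notMem_erase i univ (mem_powerset.1 hS h)
  rw [prod_insert hiS, compl_insert, ← mul_prod_erase Sᶜ (fun j => 1 - q j) (mem_compl.2 hiS)]
  split_ifs <;> ring

lemma bernoulliSetProb_le_of_le_of_eq_off {𝒜 : Finset (Finset ι)}
    (h𝒜 : IsUpperSet (𝒜 : Set (Finset ι))) {q r : ι → ℝ} (i : ι)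
    (hq0 : ∀ j, 0 ≤ q j) (hq1 : ∀ j, q j ≤ 1) (hqr : ∀ j ≠ i, q j = r j) (hi : q i ≤ r i) :
    bernoulliSetProb 𝒜 q ≤ bernoulliSetProb 𝒜 r := by
  rw [bernoulliSetProb_eq_sum_powerset_erase 𝒜 q i, bernoulliSetProb_eq_sum_powerset_erase 𝒜 r i]
  refine sum_le_sum fun S hS => ?_
  have hiS : i ∉ S := fun h => notMem_erase i univ (mem_powerset.1 hS h)
  have hrest : (∏ j ∈ S, q j) * ∏ j ∈ Sᶜ.erase i, (1 - q j) =
      (∏ j ∈ S, r j) * ∏ j ∈ Sᶜ.erase i, (1 - r j) := by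
    congr 1
    · exact prod_congr rfl fun j hj => hqr j (ne_of_mem_of_not_mem hj hiS)
    · exact prod_congr rfl fun j hj => by rw [hqr j (ne_of_mem_erase hj)]
  have hrest0 : 0 ≤ (∏ j ∈ S, q j) * ∏ j ∈ Sᶜ.erase i, (1 - q j) :=
    mul_nonneg (prod_nonneg fun j _ => hq0 j) (prod_nonneg fun j _ => sub_nonneg.2 (hq1 j))
  rw [← hrest]
  refine mul_le_mul_of_nonneg_right ?_ hrest0
  -- as `𝒜` is an upper set, the coefficient is `1` if `S ∈ 𝒜`, and `q i` or `0` otherwise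
  by_cases hS𝒜 : S ∈ 𝒜
  · have : insert i S ∈ 𝒜 := h𝒜 (subset_insert i S) hS𝒜
    simp only [this, hS𝒜, if_true]
    linarith
  · simp only [hS𝒜, if_false, add_zero]
    split_ifs
    · exact hi
    · exact le_rfl

theorem bernoulliSetProb_mono {𝒜 : Finset (Finset ι)}
    (h𝒜 : IsUpperSet (𝒜 : Set (Finset ι))) {q r : ι → ℝ}
    (hq0 : ∀ j, 0 ≤ q j) (hqr : q ≤ r) (hr1 : ∀ j, r j ≤ 1) :
    bernoulliSetProb 𝒜 q ≤ bernoulliSetProb 𝒜 r := by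
  suffices h : ∀ u : Finset ι, bernoulliSetProb 𝒜 q ≤ bernoulliSetProb 𝒜 (u.piecewise r q) by
    simpa using h univ
  intro u
  induction u using Finset.induction_on with
  | empty => simp
  | insert i u hiu ih =>
    refine ih.trans (bernoulliSetProb_le_of_le_of_eq_off h𝒜 i (fun j => ?_) (fun j => ?_)
      (fun j hj => ?_) ?_)
    · by_cases hj : j ∈ u <;> simp [hj, hq0 j, (hq0 j).trans (hqr j)]
    · by_cases hj : j ∈ u <;> simp [hj, hr1 j, (hqr j).trans (hr1 j)]
    · rw [piecewise_insert, Function.update_of_ne hj]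
    · rw [piecewise_insert, Function.update_self, piecewise_eq_of_notMem _ _ _ hiu]
      exact hqr i

lemma card_filter_succ_le_card_eq_four_pow (n : ℕ) (hι : Fintype.card ι = 2 * n + 1) :
    #{S : Finset ι | n + 1 ≤ #S} = 4 ^ n := by
  have hcompl : #{S : Finset ι | n + 1 ≤ #S} = #{S : Finset ι | ¬ n + 1 ≤ #S} := by
    refine card_nbij' compl compl (fun S hS => ?_) (fun S hS => ?_) (fun S _ => compl_compl S)
      (fun S _ => compl_compl S) <;>
    · simp only [coe_filter, mem_univ, true_and, Set.mem_ofPred_eq, card_compl, hι] at hS ⊢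
      have := S.card_le_univ
      omega
  have htotal := card_filter_add_card_filter_not (s := (univ : Finset (Finset ι)))
    (fun S => n + 1 ≤ #S)
  have hpow : 2 ^ (2 * n + 1) = 2 * 4 ^ n := by rw [pow_succ, pow_mul]; ring
  rw [card_univ, Fintype.card_finset, hι, hpow] at htotal
  omega

lemma pow_mul_pow_sub_le {a b : ℝ} (ha : 0 ≤ a) (hab : a ≤ b) {m j N : ℕ} (hmj : m ≤ j)
    (hjN : j ≤ N) : a ^ j * b ^ (N - j) ≤ a ^ m * b ^ (N - m) := by
  obtain ⟨d, rfl⟩ := Nat.exists_eq_add_of_le hmj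
  have hb : b ^ (N - m) = b ^ d * b ^ (N - (m + d)) := by rw [← pow_add]; congr 1; omega
  rw [hb, pow_add, mul_assoc]
  gcongr
  exact pow_nonneg (ha.trans hab) _

theorem bernoulliSetProb_majority_le (n : ℕ) (hι : Fintype.card ι = 2 * n + 1) {q : ι → ℝ}
    {α : ℝ} (hq0 : ∀ i, 0 ≤ q i) (hqα : ∀ i, q i ≤ α) (hα : α ≤ 1 / 2) :
    bernoulliSetProb {S : Finset ι | n + 1 ≤ #S} q ≤ 4 ^ n * (α ^ (n + 1) * (1 - α) ^ n) := by
  have : Nonempty ι := Fintype.card_pos_iff.1 (by omega)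
  have hα0 : 0 ≤ α := (hq0 (Classical.arbitrary ι)).trans (hqα _)
  have hup : IsUpperSet (({S : Finset ι | n + 1 ≤ #S} : Finset (Finset ι)) : Set (Finset ι)) :=
    fun S T hST hS => by simpa using (mem_filter.1 hS).2.trans (card_le_card hST)
  calc bernoulliSetProb {S : Finset ι | n + 1 ≤ #S} q
      ≤ bernoulliSetProb {S : Finset ι | n + 1 ≤ #S} (fun _ => α) :=
        bernoulliSetProb_mono hup hq0 hqα (fun _ => by linarith)
    _ ≤ #{S : Finset ι | n + 1 ≤ #S} • (α ^ (n + 1) * (1 - α) ^ n) := by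
        refine sum_le_card_nsmul _ _ _ fun S hS => ?_
        rw [prod_const, prod_const, card_compl, hι]
        have h := pow_mul_pow_sub_le (b := 1 - α) hα0 (by linarith) (mem_filter.1 hS).2
          (hι ▸ S.card_le_univ)
        rwa [show 2 * n + 1 - (n + 1) = n by omega] at h
    _ = 4 ^ n * (α ^ (n + 1) * (1 - α) ^ n) := by
        rw [card_filter_succ_le_card_eq_four_pow n hι, nsmul_eq_mul]; push_cast; ring

end BernoulliSetProb

lemma four_pow_mul_le_half_mul_rpow (n : ℕ) {α : ℝ} (hα0 : 0 < α) (hα1 : α < 1 / 2) :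
    4 ^ n * (α ^ (n + 1) * (1 - α) ^ n) ≤
      1 / 2 * (4 * α * (1 - α)) ^ (((2 * n + 1 : ℕ) : ℝ) / 2) := by
  have hc : 0 < 4 * α * (1 - α) := by nlinarith
  have hexp : ((2 * n + 1 : ℕ) : ℝ) / 2 = n + 1 / 2 := by push_cast; ring
  rw [hexp, Real.rpow_add hc, Real.rpow_natCast, ← Real.sqrt_eq_rpow]
  have hsqrt : 2 * α ≤ √(4 * α * (1 - α)) :=
    Real.le_sqrt_of_sq_le (by nlinarith)
  calc 4 ^ n * (α ^ (n + 1) * (1 - α) ^ n) = 1 / 2 * ((4 * α * (1 - α)) ^ n * (2 * α)) := by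
        rw [mul_pow, mul_pow, pow_succ]; ring
    _ ≤ _ := by gcongr

lemma le_card_filter_lt_abs_sub {ι : Type*} [Fintype ι] {y : ι → ℝ} {M a ε : ℝ} {m : ℕ}
    (hle : m ≤ #{i | y i ≤ M}) (hge : m ≤ #{i | M ≤ y i}) (hM : ε < |M - a|) :
    m ≤ #{i | ε < |y i - a|} := by
  rcases lt_abs.1 hM with h | h
  · refine hge.trans (card_le_card (monotone_filter_right _ fun i _ hi => ?_))
    exact h.trans_le ((by linarith : M - a ≤ y i - a).trans (le_abs_self _))
  · refine hle.trans (card_le_card (monotone_filter_right _ fun i _ hi => ?_))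
    exact h.trans_le ((by linarith : -(M - a) ≤ -(y i - a)).trans (neg_le_abs _))

open MeasureTheory ProbabilityTheory

lemma ProbabilityTheory.iIndepFun.iIndepSet_preimage {Ω ι β : Type*} [MeasurableSpace Ω]
    [MeasurableSpace β] {μ : Measure Ω} {Y : ι → Ω → β} (hY : iIndepFun Y μ) {B : ι → Set β}
    (hB : ∀ i, MeasurableSet (B i)) : iIndepSet (fun i => Y i ⁻¹' B i) μ :=
  (iIndepSet_iff_iIndep _ μ).2 <| iIndep_of_iIndep_of_le hY fun i =>
    MeasurableSpace.generateFrom_le fun _ hs => hs ▸ ⟨B i, hB i, rfl⟩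

section

variable {Ω ι : Type*} [Fintype ι] [DecidableEq ι]

open scoped Classical in
lemma setOf_filter_mem_eq_iInter (A : ι → Set Ω) (S : Finset ι) :
    {ω | ({i | ω ∈ A i} : Finset ι) = S} = ⋂ i, if i ∈ S then A i else (A i)ᶜ := by
  ext ω
  simp only [Set.mem_ofPred_eq, Finset.ext_iff, mem_filter, mem_univ, true_and, Set.mem_iInter]
  refine forall_congr' fun i => ?_
  split_ifs with h <;> simp [h]

open scoped Classical in
theorem measureReal_filter_mem_eq_bernoulliSetProb [MeasurableSpace Ω] {μ : Measure Ω}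
    {A : ι → Set Ω} (hA : iIndepSet A μ) (hAm : ∀ i, MeasurableSet (A i)) (𝒜 : Finset (Finset ι)) :
    μ.real {ω | ({i | ω ∈ A i} : Finset ι) ∈ 𝒜} = bernoulliSetProb 𝒜 (fun i => μ.real (A i)) := by
  have := hA.isProbabilityMeasure
  have hpattern : ∀ S : Finset ι, MeasurableSet {ω | ({i | ω ∈ A i} : Finset ι) = S} := fun S => by
    rw [setOf_filter_mem_eq_iInter]
    exact MeasurableSet.iInter fun i => by split_ifs; exacts [hAm i, (hAm i).compl]
  have hindep := (iIndepSet_iff_iIndep A μ).1 hA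
  calc μ.real {ω | ({i | ω ∈ A i} : Finset ι) ∈ 𝒜}
      = ∑ S ∈ 𝒜, μ.real {ω | ({i | ω ∈ A i} : Finset ι) = S} :=
        (sum_measureReal_preimage_singleton 𝒜 fun S _ => hpattern S).symm
    _ = bernoulliSetProb 𝒜 (fun i => μ.real (A i)) := by
        refine sum_congr rfl fun S _ => ?_
        rw [setOf_filter_mem_eq_iInter, measureReal_def, hindep.meas_iInter, ENNReal.toReal_prod]
        · simp only [apply_ite (fun s => (μ s).toReal), ← measureReal_def,
            probReal_compl_eq_one_sub (hAm _), prod_ite, filter_mem_eq_inter, univ_inter,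
            filter_notMem_eq_sdiff, compl_eq_univ_sdiff]
        · intro i
          split_ifs
          exacts [MeasurableSpace.measurableSet_generateFrom rfl,
            (MeasurableSpace.measurableSet_generateFrom (Set.mem_singleton (A i))).compl]

end

theorem median_trick_general {Ω : Type*} [MeasurableSpace Ω]
    (μ : Measure Ω) [IsProbabilityMeasure μ]
    (k : ℕ) (hk : Odd k)
    (Y : Fin k → Ω → ℝ) (hmeas : ∀ i, Measurable (Y i))
    (hindep : iIndepFun Y μ)
    (a ε α : ℝ) (hα0 : 0 < α) (hα1 : α < 1 / 2)
    (hY : ∀ i, μ {ω | |Y i ω - a| > ε} ≤ ENNReal.ofReal α)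
    (M : Ω → ℝ)
    (hM : ∀ ω, (k + 1) / 2 ≤ (Finset.univ.filter (fun i => Y i ω ≤ M ω)).card ∧
      (k + 1) / 2 ≤ (Finset.univ.filter (fun i => M ω ≤ Y i ω)).card) :
    μ {ω | |M ω - a| > ε} ≤
      ENNReal.ofReal (1 / 2 * (4 * α * (1 - α)) ^ ((k : ℝ) / 2)) := by
  classical
  obtain ⟨n, rfl⟩ := hk
  set A : Fin (2 * n + 1) → Set Ω := fun i => {ω | |Y i ω - a| > ε}
  have hAm : ∀ i, MeasurableSet (A i) := fun i =>
    measurableSet_lt measurable_const (((hmeas i).sub_const a).abs)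
  have hAindep : iIndepSet A μ :=
    hindep.iIndepSet_preimage (B := fun _ => {x | |x - a| > ε}) fun _ =>
      measurableSet_lt measurable_const (measurable_id.sub_const a).abs
  have hbad : {ω | |M ω - a| > ε} ⊆
      {ω | ({i | ω ∈ A i} : Finset _) ∈ ({S | n + 1 ≤ #S} : Finset (Finset _))} := fun ω hω => by
    have hn : (2 * n + 1 + 1) / 2 = n + 1 := by omega
    simpa [hn, A] using le_card_filter_lt_abs_sub (hM ω).1 (hM ω).2 hω
  calc μ {ω | |M ω - a| > ε}
      ≤ ENNReal.ofReal (bernoulliSetProb {S | n + 1 ≤ #S} fun i => μ.real (A i)) := by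
        rw [← measureReal_filter_mem_eq_bernoulliSetProb hAindep hAm, ofReal_measureReal]
        exact measure_mono hbad
    _ ≤ _ := ENNReal.ofReal_le_ofReal <|
        (bernoulliSetProb_majority_le n (Fintype.card_fin _) (fun _ => measureReal_nonneg)
          (fun i => ENNReal.toReal_le_of_le_ofReal hα0.le (hY i)) hα1.le).trans
        (four_pow_mul_le_half_mul_rpow n hα0 hα1)

/-- Median trick: if `Y_1,…,Y_k` (k odd) are independent and each satisfies
`P(|Y_i - a| > ε) ≤ α` with `0 < α < 1/2`, and `M` is (pointwise) a median of
`Y_1,…,Y_k` (at least `(k+1)/2` of the values are `≤ M` and at least `(k+1)/2`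
are `≥ M`), then `P(|M - a| > ε) ≤ (1/2)·(4α(1-α))^{k/2}`. -/
theorem median_trick {Ω : Type*} [MeasurableSpace Ω]
    (μ : Measure Ω) [IsProbabilityMeasure μ]
    (k : ℕ) (hk : Odd k)
    (Y : Fin k → Ω → ℝ) (hmeas : ∀ i, Measurable (Y i))
    (hindep : iIndepFun Y μ)
    (a ε α : ℝ) (hε : 0 < ε) (hα0 : 0 < α) (hα1 : α < 1 / 2)
    (hY : ∀ i, μ {ω | |Y i ω - a| > ε} ≤ ENNReal.ofReal α)
    (M : Ω → ℝ)
    (hM : ∀ ω, (k + 1) / 2 ≤ (Finset.univ.filter (fun i => Y i ω ≤ M ω)).card ∧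
      (k + 1) / 2 ≤ (Finset.univ.filter (fun i => M ω ≤ Y i ω)).card) :
    μ {ω | |M ω - a| > ε} ≤
      ENNReal.ofReal (1 / 2 * (4 * α * (1 - α)) ^ ((k : ℝ) / 2)) :=
  median_trick_general μ k hk Y hmeas hindep a ε α hα0 hα1 hY M hM
end

section
/- Let d, m ∈ ℕ with m ≥ 1, β ∈ (0,1], and let f : [0,1]^d → ℝ satisfy |f(x) − f(z)| ≤ |x − z|_∞^β for all x, z ∈ [0,1]^d. Let (X_i)_{i ∈ {0,…,m−1}^d} be independent random variables with X_i uniformly distributed on the subcube G_i := Π_{j=1}^d [i_j/m, (i_j+1)/m), and let S := m^{-d} · Σ_{i ∈ {0,…,m−1}^d} f(X_i). Then for every ε > 0, P( | S − ∫_{[0,1]^d} f(x) dx | > ε ) ≤ 2 · exp( −2 · m^{d + 2β} · ε² ). -/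
/-!
On each subcube `G_i` of side `1/m` the Hölder condition confines `f` to an interval of length
`m^{-β}`, so the summands `m^{-d} f(X_i)` are independent and each lies in an interval of length
`m^{-d-β}`. Their means add up to `∫ f`, because `X_i` has density `m^d` on `G_i` and the
subcubes partition `[0,1)^d`, which differs from `[0,1]^d` by a null set. Hoeffding's
inequality for the `m^d` summands then gives the bound, since the squared interval lengths add
up to `m^d (m^{-d-β})² = m^{-d-2β}`.
-/

open MeasureTheory ProbabilityTheory Real Set Function
open scoped NNReal ENNReal

lemma holderOnWith_of_dist_le {X Y : Type*} [PseudoMetricSpace X] [PseudoMetricSpace Y]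
    {C r : ℝ≥0} {f : X → Y} {s : Set X}
    (h : ∀ x ∈ s, ∀ y ∈ s, dist (f x) (f y) ≤ C * dist x y ^ (r : ℝ)) :
    HolderOnWith C r f s := by
  intro x hx y hy
  rw [edist_dist, edist_dist, ENNReal.ofReal_rpow_of_nonneg dist_nonneg r.coe_nonneg,
    ← ENNReal.ofReal_coe_nnreal, ← ENNReal.ofReal_mul C.coe_nonneg]
  exact ENNReal.ofReal_le_ofReal (h x hx y hy)

lemma continuousOn_of_abs_sub_le_norm_rpow {E : Type*} [SeminormedAddCommGroup E] {f : E → ℝ}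
    {s : Set E} {β : ℝ} (hβ : 0 < β) (hf : ∀ x z, x ∈ s → z ∈ s → |f x - f z| ≤ ‖x - z‖ ^ β) :
    ContinuousOn f s := by
  refine HolderOnWith.continuousOn (C := 1) (r := ⟨β, hβ.le⟩) ?_ hβ
  refine holderOnWith_of_dist_le fun x hx z hz => ?_
  rw [NNReal.coe_one, one_mul, dist_eq_norm, dist_eq_norm, Real.norm_eq_abs]
  exact hf x z hx hz

lemma exists_forall_mem_Icc_add_of_abs_sub_le {α : Type*} {s : Set α} {g : α → ℝ} {δ : ℝ}
    (h : ∀ x ∈ s, ∀ y ∈ s, |g x - g y| ≤ δ) : ∃ a, ∀ x ∈ s, g x ∈ Icc a (a + δ) := by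
  rcases s.eq_empty_or_nonempty with rfl | ⟨x₀, hx₀⟩
  · exact ⟨0, fun x hx => hx.elim⟩
  have hbdd : BddBelow (g '' s) :=
    ⟨g x₀ - δ, by rintro _ ⟨y, hy, rfl⟩; linarith [abs_le.1 (h x₀ hx₀ y hy)]⟩
  refine ⟨sInf (g '' s), fun x hx => ⟨csInf_le hbdd ⟨x, hx, rfl⟩, ?_⟩⟩
  have : g x - δ ≤ sInf (g '' s) := le_csInf ⟨g x₀, x₀, hx₀, rfl⟩ <| by
    rintro _ ⟨y, hy, rfl⟩; linarith [abs_le.1 (h x hx y hy)]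
  linarith

lemma ProbabilityTheory.HasSubgaussianMGF.measureReal_abs_ge_le {Ω : Type*} [MeasurableSpace Ω]
    {μ : Measure Ω} {X : Ω → ℝ} {c : ℝ≥0} (h : HasSubgaussianMGF X c μ) {ε : ℝ} (hε : 0 ≤ ε) :
    μ.real {ω | ε ≤ |X ω|} ≤ 2 * exp (-ε ^ 2 / (2 * c)) := by
  have hsplit : {ω | ε ≤ |X ω|} = {ω | ε ≤ X ω} ∪ {ω | ε ≤ (-X) ω} := by
    ext ω
    simp only [mem_ofPred_eq, mem_union, Pi.neg_apply, le_abs', le_neg]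
    exact or_comm
  calc μ.real {ω | ε ≤ |X ω|}
      ≤ μ.real {ω | ε ≤ X ω} + μ.real {ω | ε ≤ (-X) ω} := hsplit ▸ measureReal_union_le _ _
    _ ≤ exp (-ε ^ 2 / (2 * c)) + exp (-ε ^ 2 / (2 * c)) :=
      add_le_add (h.measure_ge_le hε) (h.neg.measure_ge_le hε)
    _ = 2 * exp (-ε ^ 2 / (2 * c)) := by ring

lemma measureReal_abs_sum_sub_integral_ge_le {Ω ι : Type*} [MeasurableSpace Ω] {μ : Measure Ω}
    [IsProbabilityMeasure μ] [Fintype ι] {Y : ι → Ω → ℝ} (hindep : iIndepFun Y μ)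
    (hY : ∀ i, AEMeasurable (Y i) μ) {a b : ι → ℝ} (hab : ∀ i, ∀ᵐ ω ∂μ, Y i ω ∈ Icc (a i) (b i))
    {ε : ℝ} (hε : 0 ≤ ε) :
    μ.real {ω | ε ≤ |∑ i, (Y i ω - μ[Y i])|} ≤ 2 * exp (-2 * ε ^ 2 / ∑ i, (b i - a i) ^ 2) := by
  have hcentered : iIndepFun (fun i ω => Y i ω - μ[Y i]) μ :=
    hindep.comp (fun i (y : ℝ) => y - ∫ ω, Y i ω ∂μ) fun _ => measurable_id.sub_const _
  have hsum := HasSubgaussianMGF.sum_of_iIndepFun hcentered (s := Finset.univ)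
    fun i _ => hasSubgaussianMGF_of_mem_Icc (hY i) (hab i)
  refine (hsum.measureReal_abs_ge_le hε).trans_eq ?_
  congr 2
  push_cast
  simp only [Real.norm_eq_abs, div_pow, sq_abs, ← Finset.sum_div]
  rw [show ∀ S : ℝ, 2 * (S / 2 ^ 2) = S / 2 by intro; ring, div_div_eq_mul_div]
  ring

section law

variable {Ω E : Type*} [MeasurableSpace Ω] [MeasurableSpace E] {μ : Measure Ω} {ν : Measure E}
  {X : Ω → E} {s : Set E} {c : ℝ≥0∞}

lemma ae_mem_of_map_eq_smul_restrict (hX : AEMeasurable X μ) (hs : MeasurableSet s)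
    (hlaw : μ.map X = c • ν.restrict s) : ∀ᵐ ω ∂μ, X ω ∈ s :=
  ae_of_ae_map hX (hlaw ▸ Measure.ae_smul_measure (ae_restrict_mem hs) c)

lemma integral_comp_of_map_eq_smul_restrict (hX : AEMeasurable X μ)
    (hlaw : μ.map X = c • ν.restrict s) {g : E → ℝ} (hg : AEStronglyMeasurable g (ν.restrict s)) :
    ∫ ω, g (X ω) ∂μ = c.toReal * ∫ x in s, g x ∂ν := by
  rw [← integral_map hX (hlaw ▸ hg.smul_measure c), hlaw, integral_smul_measure, smul_eq_mul]

end law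

lemma mem_Ico_div_iff_floor_eq {m : ℕ} (hm : 0 < m) {x : ℝ} (hx : 0 ≤ x) (k : ℕ) :
    x ∈ Ico ((k : ℝ) / m) (((k : ℝ) + 1) / m) ↔ ⌊x * m⌋₊ = k := by
  have hm' : (0 : ℝ) < m := Nat.cast_pos.2 hm
  rw [Nat.floor_eq_iff (by positivity), mem_Ico, div_le_iff₀ hm', lt_div_iff₀ hm']

def subcube {ι : Type*} (m : ℕ) (i : ι → Fin m) : Set (ι → ℝ) :=
  univ.pi fun j => Ico ((i j : ℝ) / m) (((i j : ℝ) + 1) / m)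

section subcube

variable {ι : Type*} {m : ℕ}

lemma measurableSet_subcube [Countable ι] (i : ι → Fin m) : MeasurableSet (subcube m i) :=
  .univ_pi fun _ => measurableSet_Ico

lemma subcube_subset_pi_Ico (i : ι → Fin m) : subcube m i ⊆ univ.pi fun _ => Ico 0 1 :=
  pi_mono fun j _ => Ico_subset_Ico (by positivity)
    (div_le_one_of_le₀ (by exact_mod_cast (i j).isLt) (Nat.cast_nonneg _))

lemma subcube_subset_Icc (i : ι → Fin m) : subcube m i ⊆ Icc 0 1 :=
  (subcube_subset_pi_Ico i).trans <| (pi_mono fun _ _ => Ico_subset_Icc_self).trans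
    (pi_univ_Icc 0 1).subset

lemma mem_subcube_iff (hm : 0 < m) {i : ι → Fin m} {x : ι → ℝ} (hx : 0 ≤ x) :
    x ∈ subcube m i ↔ ∀ j, ⌊x j * m⌋₊ = i j := by
  simp only [subcube, mem_univ_pi, mem_Ico_div_iff_floor_eq hm (hx _)]

lemma pairwise_disjoint_subcube :
    Pairwise (Disjoint on (subcube m : (ι → Fin m) → Set (ι → ℝ))) := by
  intro i i' hne
  refine disjoint_left.2 fun x hx hx' => hne <| funext fun j => Fin.ext ?_
  have hm := Fin.pos (i j)
  have hx0 := (subcube_subset_Icc i hx).1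
  rw [← (mem_subcube_iff hm hx0).1 hx j, (mem_subcube_iff hm hx0).1 hx' j]

lemma iUnion_subcube (hm : 0 < m) : ⋃ i, subcube (ι := ι) m i = univ.pi fun _ => Ico 0 1 := by
  refine (iUnion_subset subcube_subset_pi_Ico).antisymm fun x hx => mem_iUnion.2 ?_
  simp only [mem_univ_pi, mem_Ico] at hx
  have hm' : (0 : ℝ) < m := Nat.cast_pos.2 hm
  have hlt : ∀ j, ⌊x j * m⌋₊ < m := fun j =>
    (Nat.floor_lt (by nlinarith [(hx j).1])).2 (by nlinarith [(hx j).2])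
  exact ⟨fun j => ⟨_, hlt j⟩, (mem_subcube_iff hm fun j => (hx j).1).2 fun j => rfl⟩

lemma norm_sub_le_of_mem_subcube [Fintype ι] {i : ι → Fin m} {x y : ι → ℝ}
    (hx : x ∈ subcube m i) (hy : y ∈ subcube m i) : ‖x - y‖ ≤ (m : ℝ)⁻¹ := by
  refine (pi_norm_le_iff_of_nonneg (by positivity)).2 fun j => ?_
  have hxj := hx j (mem_univ j)
  have hyj := hy j (mem_univ j)
  rw [Pi.sub_apply, Real.norm_eq_abs, abs_sub_le_iff]
  have : ((i j : ℝ) + 1) / m - (i j : ℝ) / m = (m : ℝ)⁻¹ := by ring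
  constructor <;> linarith [hxj.1, hxj.2, hyj.1, hyj.2]

lemma abs_sub_le_of_mem_subcube [Fintype ι] {β : ℝ} (hβ : 0 ≤ β)
    {f : (ι → ℝ) → ℝ} (hf : ∀ x z, x ∈ Icc (0 : ι → ℝ) 1 → z ∈ Icc (0 : ι → ℝ) 1 →
      |f x - f z| ≤ ‖x - z‖ ^ β)
    (i : ι → Fin m) : ∀ x ∈ subcube m i, ∀ y ∈ subcube m i, |f x - f y| ≤ ((m : ℝ) ^ β)⁻¹ :=
  fun x hx y hy => (hf x y (subcube_subset_Icc i hx) (subcube_subset_Icc i hy)).trans <| by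
    rw [← inv_rpow (Nat.cast_nonneg m)]
    exact rpow_le_rpow (norm_nonneg _) (norm_sub_le_of_mem_subcube hx hy) hβ

lemma setIntegral_Icc_eq_sum_subcube [Fintype ι] [DecidableEq ι] (hm : 0 < m)
    {f : (ι → ℝ) → ℝ} (hf : IntegrableOn f (Icc 0 1)) :
    ∫ x in Icc 0 1, f x = ∑ i : ι → Fin m, ∫ x in subcube m i, f x := by
  rw [← integral_iUnion_fintype measurableSet_subcube pairwise_disjoint_subcube
    fun i => hf.mono_set (subcube_subset_Icc i), iUnion_subcube hm]
  exact setIntegral_congr_set Measure.univ_pi_Ico_ae_eq_Icc.symm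

end subcube

section stratified

variable {Ω ι : Type*} [MeasurableSpace Ω] {μ : Measure Ω} [Fintype ι] [DecidableEq ι] {m : ℕ}
  {X : (ι → Fin m) → Ω → (ι → ℝ)}

lemma sum_integral_comp_eq_setIntegral_Icc (hm : 0 < m) {f : (ι → ℝ) → ℝ}
    (hf : ContinuousOn f (Icc 0 1)) (hmeas : ∀ i, Measurable (X i))
    (hlaw : ∀ i, μ.map (X i) = (m : ℝ≥0∞) ^ Fintype.card ι • volume.restrict (subcube m i)) :
    ∑ i, ∫ ω, f (X i ω) ∂μ = (m : ℝ) ^ Fintype.card ι * ∫ x in Icc 0 1, f x := by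
  rw [setIntegral_Icc_eq_sum_subcube hm (hf.integrableOn_compact isCompact_Icc), Finset.mul_sum]
  refine Finset.sum_congr rfl fun i _ => ?_
  rw [integral_comp_of_map_eq_smul_restrict (hmeas i).aemeasurable (hlaw i)
    ((hf.mono (subcube_subset_Icc i)).aestronglyMeasurable (measurableSet_subcube i)),
    ENNReal.toReal_pow, ENNReal.toReal_natCast]

theorem measureReal_abs_stratified_sub_integral_ge_le [IsProbabilityMeasure μ] (hm : 0 < m)
    {f : (ι → ℝ) → ℝ} (hf : ContinuousOn f (Icc 0 1)) {δ : ℝ}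
    (hosc : ∀ i, ∀ x ∈ subcube m i, ∀ y ∈ subcube m i, |f x - f y| ≤ δ)
    (hmeas : ∀ i, Measurable (X i)) (hindep : iIndepFun X μ)
    (hlaw : ∀ i, μ.map (X i) = (m : ℝ≥0∞) ^ Fintype.card ι • volume.restrict (subcube m i))
    {ε : ℝ} (hε : 0 ≤ ε) :
    μ.real {ω | ε ≤ |((m : ℝ) ^ Fintype.card ι)⁻¹ * ∑ i, f (X i ω) - ∫ x in Icc 0 1, f x|} ≤
      2 * exp (-2 * (m : ℝ) ^ Fintype.card ι * ε ^ 2 / δ ^ 2) := by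
  set N : ℝ := (m : ℝ) ^ Fintype.card ι with hN
  have hN0 : N ≠ 0 := pow_ne_zero _ (Nat.cast_ne_zero.2 hm.ne')
  have hmean : ∑ i, ∫ ω, f (X i ω) ∂μ = N * ∫ x in Icc 0 1, f x :=
    sum_integral_comp_eq_setIntegral_Icc hm hf hmeas hlaw
  have hfX : ∀ i, AEMeasurable (fun x => N⁻¹ * f x) (μ.map (X i)) := fun i => by
    rw [hlaw i]
    exact (((hf.mono (subcube_subset_Icc i)).aemeasurable (measurableSet_subcube i)).smul_measure
      _).const_mul _
  set W : (ι → Fin m) → Ω → ℝ := fun i ω => N⁻¹ * f (X i ω)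
  choose a ha using fun i => exists_forall_mem_Icc_add_of_abs_sub_le (hosc i)
  have hWmem : ∀ i, ∀ᵐ ω ∂μ, W i ω ∈ Icc (N⁻¹ * a i) (N⁻¹ * (a i + δ)) := fun i =>
    (ae_mem_of_map_eq_smul_restrict (hmeas i).aemeasurable (measurableSet_subcube i)
      (hlaw i)).mono fun ω hω => by
        have hinv : 0 ≤ N⁻¹ := by positivity
        exact ⟨mul_le_mul_of_nonneg_left (ha i _ hω).1 hinv,
          mul_le_mul_of_nonneg_left (ha i _ hω).2 hinv⟩
  have hdev : ∀ ω, N⁻¹ * ∑ i, f (X i ω) - ∫ x in Icc 0 1, f x = ∑ i, (W i ω - μ[W i]) :=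
    fun ω => by
      simp only [W, Finset.sum_sub_distrib, integral_const_mul, ← Finset.mul_sum, hmean,
        inv_mul_cancel_left₀ hN0]
  simp only [hdev]
  refine (measureReal_abs_sum_sub_integral_ge_le
    (hindep.comp₀ _ (fun i => (hmeas i).aemeasurable) hfX)
    (fun i => (hfX i).comp_aemeasurable (hmeas i).aemeasurable) hWmem hε).trans_eq ?_
  simp only [mul_add, add_sub_cancel_left, Finset.sum_const, Finset.card_univ, Fintype.card_fun,
    Fintype.card_fin, nsmul_eq_mul, Nat.cast_pow, ← hN]
  rw [show N * (N⁻¹ * δ) ^ 2 = δ ^ 2 / N by field_simp, div_div_eq_mul_div]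
  ring_nf

end stratified

theorem stratified_sampling_hoelder_tail_general {Ω : Type*} [MeasurableSpace Ω]
    (μ : Measure Ω) [IsProbabilityMeasure μ]
    (d m : ℕ) (hm : 1 ≤ m)
    (β : ℝ) (hβ0 : 0 < β)
    (f : (Fin d → ℝ) → ℝ)
    (hf : ∀ x z, x ∈ Set.Icc (0 : Fin d → ℝ) 1 → z ∈ Set.Icc (0 : Fin d → ℝ) 1 →
      |f x - f z| ≤ ‖x - z‖ ^ β)
    (X : (Fin d → Fin m) → Ω → (Fin d → ℝ))
    (hmeas : ∀ i, Measurable (X i))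
    (hindep : iIndepFun X μ)
    (hlaw : ∀ i, Measure.map (X i) μ =
      ((m : ENNReal) ^ d) •
        volume.restrict (Set.univ.pi fun j => Set.Ico ((i j : ℝ) / m) (((i j : ℝ) + 1) / m)))
    (ε : ℝ) (hε : 0 < ε) :
    μ {ω | |((m : ℝ) ^ d)⁻¹ * ∑ i : Fin d → Fin m, f (X i ω) -
        ∫ x in Set.Icc (0 : Fin d → ℝ) 1, f x| > ε} ≤
      ENNReal.ofReal (2 * Real.exp (-2 * (m : ℝ) ^ ((d : ℝ) + 2 * β) * ε ^ 2)) := by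
  have hlaw' : ∀ i, μ.map (X i) =
      (m : ℝ≥0∞) ^ Fintype.card (Fin d) • volume.restrict (subcube m i) :=
    fun i => by rw [Fintype.card_fin]; exact hlaw i
  have hbound := measureReal_abs_stratified_sub_integral_ge_le hm
    (continuousOn_of_abs_sub_le_norm_rpow hβ0 hf) (abs_sub_le_of_mem_subcube hβ0.le hf) hmeas hindep
    hlaw' hε.le
  have hexponent : -2 * (m : ℝ) ^ d * ε ^ 2 / ((m : ℝ) ^ β)⁻¹ ^ 2 =
      -2 * (m : ℝ) ^ ((d : ℝ) + 2 * β) * ε ^ 2 := by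
    rw [rpow_add (by exact_mod_cast hm), rpow_natCast, two_mul, rpow_add (by exact_mod_cast hm)]
    field_simp
  rw [Fintype.card_fin, hexponent] at hbound
  calc μ {ω | |((m : ℝ) ^ d)⁻¹ * ∑ i, f (X i ω) - ∫ x in Icc 0 1, f x| > ε}
      ≤ μ {ω | ε ≤ |((m : ℝ) ^ d)⁻¹ * ∑ i, f (X i ω) - ∫ x in Icc 0 1, f x|} :=
        measure_mono <| ofPred_subset_ofPred.2 fun _ => le_of_lt
    _ = ENNReal.ofReal (μ.real {ω | ε ≤ |((m : ℝ) ^ d)⁻¹ * ∑ i, f (X i ω) -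
          ∫ x in Icc 0 1, f x|}) := (ofReal_measureReal).symm
    _ ≤ _ := ENNReal.ofReal_le_ofReal hbound

/-- Probabilistic error bound for stratified sampling of Hölder-β functions on
`[0,1]^d`: `P(|S - ∫ f| > ε) ≤ 2·exp(-2·m^{d+2β}·ε²)`. -/
theorem stratified_sampling_hoelder_tail {Ω : Type*} [MeasurableSpace Ω]
    (μ : Measure Ω) [IsProbabilityMeasure μ]
    (d m : ℕ) (hm : 1 ≤ m)
    (β : ℝ) (hβ0 : 0 < β) (hβ1 : β ≤ 1)
    (f : (Fin d → ℝ) → ℝ)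
    (hf : ∀ x z, x ∈ Set.Icc (0 : Fin d → ℝ) 1 → z ∈ Set.Icc (0 : Fin d → ℝ) 1 →
      |f x - f z| ≤ ‖x - z‖ ^ β)
    (X : (Fin d → Fin m) → Ω → (Fin d → ℝ))
    (hmeas : ∀ i, Measurable (X i))
    (hindep : iIndepFun X μ)
    (hlaw : ∀ i, Measure.map (X i) μ =
      ((m : ENNReal) ^ d) •
        volume.restrict (Set.univ.pi fun j => Set.Ico ((i j : ℝ) / m) (((i j : ℝ) + 1) / m)))
    (ε : ℝ) (hε : 0 < ε) :
    μ {ω | |((m : ℝ) ^ d)⁻¹ * ∑ i : Fin d → Fin m, f (X i ω) -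
        ∫ x in Set.Icc (0 : Fin d → ℝ) 1, f x| > ε} ≤
      ENNReal.ofReal (2 * Real.exp (-2 * (m : ℝ) ^ ((d : ℝ) + 2 * β) * ε ^ 2)) :=
  stratified_sampling_hoelder_tail_general μ d m hm β hβ0 f hf X hmeas hindep hlaw ε hε
end

section
/- Let n ∈ ℕ with n ≥ 1, let u ∈ [1 − 1/(4n), 1] and v ∈ [1/2, 3/4], and let m ∈ ℤ be such that the point x := (m + v)/(u·n) lies in [0,1]. Then 0 ≤ m ≤ n−1 and x ∈ [ (2m+1)/(2n), (m+1)/n ]. In particular, every such point x lies in the union ∪_{k=0}^{n−1} [ (2k+1)/(2n), (k+1)/n ]. -/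
/-!
Clearing the denominator `u n > 0` turns `x ∈ [0,1]` into `0 ≤ m + v ≤ u n`; since `0 < v < 1`
and `u ≤ 1` this forces `0 ≤ m < n`, and `x ≥ (m + v) / n ≥ (m + 1/2) / n`.
For the upper bound, the dilation costs at most `k / (4n) ≤ 1/4` on any `k ∈ [0, n]`, so
`u (m + 1) ≥ m + 3/4 ≥ m + v`.
-/

theorem sub_le_mul_of_one_sub_div_le {n k u c : ℝ} (hn : 0 < n) (hc : 0 ≤ c) (hk : 0 ≤ k)
    (hkn : k ≤ n) (hu : 1 - c / n ≤ u) : k - c ≤ u * k := by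
  have hkc : c * k / n ≤ c := by
    rw [mul_div_assoc]
    exact mul_le_of_le_one_right hc ((div_le_one hn).mpr hkn)
  calc k - c ≤ k - c * k / n := by linarith
    _ = (1 - c / n) * k := by ring
    _ ≤ u * k := mul_le_mul_of_nonneg_right hu hk

/-- Nodes of the one-dimensional dilated and shifted rectangle rule with
dilation `u ∈ [1 - 1/(4n), 1]` and shift `v ∈ [1/2, 3/4]`: every node
`x = (m+v)/(un)` lying in `[0,1]` has `0 ≤ m ≤ n-1` and
`x ∈ [(2m+1)/(2n), (m+1)/n]`. -/
theorem frolov_nodes_avoid_bumps (n : ℕ) (hn : 1 ≤ n) (u v : ℝ)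
    (hu : u ∈ Set.Icc (1 - 1 / (4 * (n : ℝ))) 1) (hv : v ∈ Set.Icc (1 / 2 : ℝ) (3 / 4))
    (m : ℤ) (hx : ((m : ℝ) + v) / (u * n) ∈ Set.Icc (0 : ℝ) 1) :
    0 ≤ m ∧ m ≤ (n : ℤ) - 1 ∧
      ((m : ℝ) + v) / (u * n) ∈
        Set.Icc ((2 * (m : ℝ) + 1) / (2 * n)) (((m : ℝ) + 1) / n) := by
  obtain ⟨hu_lo, hu_hi⟩ := hu
  obtain ⟨hv_lo, hv_hi⟩ := hv
  rw [div_mul_eq_div_div] at hu_lo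
  have hn0 : (0 : ℝ) < n := by exact_mod_cast hn
  have dilation_loss {k : ℝ} (hk : 0 ≤ k) (hkn : k ≤ n) : k - 1 / 4 ≤ u * k :=
    sub_le_mul_of_one_sub_div_le hn0 (by norm_num) hk hkn hu_lo
  have hun : 0 < u * n := by
    linarith [mul_comm u n, dilation_loss hn0.le le_rfl, (Nat.one_le_cast (α := ℝ)).mpr hn]
  obtain ⟨hnum_nonneg, hnum_le⟩ : 0 ≤ (m : ℝ) + v ∧ (m : ℝ) + v ≤ u * n := by
    rwa [Set.mem_Icc, le_div_iff₀ hun, div_le_iff₀ hun, zero_mul, one_mul] at hx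
  have hun_le : u * n ≤ n := mul_le_of_le_one_left hn0.le hu_hi
  have hm0 : 0 ≤ m := by
    have : ((-1 : ℤ) : ℝ) < m := by push_cast; linarith
    exact Int.lt_iff_add_one_le.mp (Int.cast_lt.mp this)
  have hmn : m < n := by
    have : (m : ℝ) < (n : ℤ) := by push_cast; linarith
    exact_mod_cast this
  have hm0' : (0 : ℝ) ≤ m := by exact_mod_cast hm0
  have hm1n : (m : ℝ) + 1 ≤ n := by exact_mod_cast hmn
  refine ⟨hm0, by omega, ?_, ?_⟩
  · calc (2 * (m : ℝ) + 1) / (2 * n) = (m + 1 / 2) / n := by field_simp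
      _ ≤ (m + v) / n := by gcongr
      _ ≤ (m + v) / (u * n) := div_le_div_of_nonneg_left hnum_nonneg hun hun_le
  · rw [div_le_div_iff₀ hun hn0]
    have hsucc := dilation_loss (by linarith) hm1n
    calc ((m : ℝ) + v) * n ≤ (u * (m + 1)) * n := by gcongr; linarith
      _ = (m + 1) * (u * n) := by ring
end
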